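/- arXiv:0805.3164 — 8 statements merged into one kernel-verified Lean document; each statement's English description precedes it below -/
import Mathlib

section
/- In a layered directed graph with N+1 stages, where stage n has M_n nodes and every node of stage n is connected by an edge to every node of stage n+1 (and there are no other edges), the maximum number of pairwise edge-disjoint paths from stage 0 to stage N is exactly min over n in {0,...,N-1} of M_n * M_{n+1}. -/
/-- A path in the complete layered graph with `N+1` stages, stage `n` having `M n` nodes:
it selects one node at each stage. -/
abbrev LayeredPath (N : ℕ) (M : Fin (N + 1) → ℕ) : Type :=
  (n : Fin (N + 1)) → Fin (M n)

/-- The edge of a path used between stage `n` and stage `n+1`. -/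
def pathEdge {N : ℕ} {M : Fin (N + 1) → ℕ} (p : LayeredPath N M) (n : Fin N) :
    Fin (M n.castSucc) × Fin (M n.succ) :=
  (p n.castSucc, p n.succ)

/-- Two paths are edge-disjoint (independent) if they share no common edge, i.e. their
edges between stage `n` and `n+1` differ for every `n`. -/
def EdgeDisjoint {N : ℕ} {M : Fin (N + 1) → ℕ} (p q : LayeredPath N M) : Prop :=
  ∀ n : Fin N, pathEdge p n ≠ pathEdge q n


private lemma key (a b m d k k' : ℕ) (hm1 : 1 ≤ m) (hm : m ≤ a * b)
    (hd : d = (m - 1) / b + 1) (hk : k < m) (hk' : k' < m)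
    (h1 : k % a = k' % a) (h2 : (k / d) % b = (k' / d) % b) : k = k' := by
  have hb : 0 < b := by
    rcases Nat.eq_zero_or_pos b with h | h
    · rw [h, mul_zero] at hm; omega
    · exact h
  have ha : 0 < a := by
    rcases Nat.eq_zero_or_pos a with h | h
    · rw [h, zero_mul] at hm; omega
    · exact h
  have hd0 : 0 < d := by rw [hd]; exact Nat.succ_pos _
  have hdb : m - 1 < b * d := by
    have := Nat.div_add_mod (m - 1) b
    have := Nat.mod_lt (m - 1) hb
    subst hd
    nlinarith [Nat.div_add_mod (m-1) b]
  have hklt : k / d < b := (Nat.div_lt_iff_lt_mul hd0).2 (by omega)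
  have hklt' : k' / d < b := (Nat.div_lt_iff_lt_mul hd0).2 (by omega)
  have h3 : k / d = k' / d := by
    rwa [Nat.mod_eq_of_lt hklt, Nat.mod_eq_of_lt hklt'] at h2
  have hda : d ≤ a := by
    have : (m - 1) / b < a := (Nat.div_lt_iff_lt_mul hb).2 (by
      calc m - 1 < m := by omega
      _ ≤ a * b := hm)
    omega
  have e1 := Nat.div_add_mod k d
  rw [h3] at e1
  have e2 := Nat.div_add_mod k' d
  have r1 : k % d < d := Nat.mod_lt _ hd0
  have r2 : k' % d < d := Nat.mod_lt _ hd0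
  rcases le_total k k' with hle | hle
  · have hdvd : a ∣ k' - k := (Nat.modEq_iff_dvd' hle).1 h1
    have hlt : k' - k < a := by omega
    have := Nat.eq_zero_of_dvd_of_lt hdvd
    omega
  · have hdvd : a ∣ k - k' := (Nat.modEq_iff_dvd' hle).1 h1.symm
    have hlt : k - k' < a := by omega
    have := Nat.eq_zero_of_dvd_of_lt hdvd
    omega

section Main

variable {N : ℕ} {M : Fin (N + 1) → ℕ}

private lemma edge_eq_imp {m : ℕ} (hM : ∀ n, 1 ≤ M n) (hm1 : 1 ≤ m)
    (hm_le : ∀ n : Fin N, m ≤ M n.castSucc * M n.succ)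
    (p : Fin m → LayeredPath N M)
    (hp : ∀ (k : Fin m) (i : Fin (N + 1)), (p k i : ℕ) =
      if i.val % 2 = 0 then k.val % M i else (k.val / ((m - 1) / M i + 1)) % M i)
    (k k' : Fin m) (n : Fin N) (h : pathEdge (p k) n = pathEdge (p k') n) : k = k' := by
  have e1 : (p k n.castSucc : ℕ) = (p k' n.castSucc : ℕ) := by
    rw [show p k n.castSucc = p k' n.castSucc from congrArg Prod.fst h]
  have e2 : (p k n.succ : ℕ) = (p k' n.succ : ℕ) := by
    rw [show p k n.succ = p k' n.succ from congrArg Prod.snd h]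
  rw [hp k n.castSucc, hp k' n.castSucc] at e1
  rw [hp k n.succ, hp k' n.succ] at e2
  have hcs : (n.castSucc : Fin (N + 1)).val = n.val := rfl
  have hsc : (n.succ : Fin (N + 1)).val = n.val + 1 := rfl
  rcases Nat.mod_two_eq_zero_or_one n.val with hpar | hpar
  · have hc2 : ¬ ((n.val + 1) % 2 = 0) := by omega
    rw [hcs, hpar, if_pos rfl, if_pos rfl] at e1
    rw [hsc, if_neg hc2, if_neg hc2] at e2
    exact Fin.ext (key (M n.castSucc) (M n.succ) m _ k.val k'.val hm1 (hm_le n) rfl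
      k.isLt k'.isLt e1 e2)
  · have hc1 : ¬ (n.val % 2 = 0) := by omega
    have hc2 : (n.val + 1) % 2 = 0 := by omega
    rw [hcs, if_neg hc1, if_neg hc1] at e1
    rw [hsc, if_pos hc2, if_pos hc2] at e2
    exact Fin.ext (key (M n.succ) (M n.castSucc) m _ k.val k'.val hm1
      (by rw [mul_comm]; exact hm_le n) rfl k.isLt k'.isLt e2 e1)

end Main

/-- The maximum number of pairwise edge-disjoint paths from stage `0` to stage `N` in the
complete layered graph is exactly `min_{0 ≤ n ≤ N-1} M n * M (n+1)`. -/
theorem max_edge_disjoint_paths (N : ℕ) (hN : 1 ≤ N) (M : Fin (N + 1) → ℕ)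
    (hM : ∀ n, 1 ≤ M n) :
    IsGreatest
      {k : ℕ | ∃ S : Finset (LayeredPath N M),
        (S : Set (LayeredPath N M)).Pairwise EdgeDisjoint ∧ S.card = k}
      (sInf (Set.range fun n : Fin N => M n.castSucc * M n.succ)) := by
  set m := sInf (Set.range fun n : Fin N => M n.castSucc * M n.succ) with hm_def
  have hne : (Set.range fun n : Fin N => M n.castSucc * M n.succ).Nonempty :=
    ⟨_, ⟨⟨0, hN⟩, rfl⟩⟩
  have hm_le : ∀ n : Fin N, m ≤ M n.castSucc * M n.succ := fun n => Nat.sInf_le ⟨n, rfl⟩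
  have hm_mem := Nat.sInf_mem hne
  obtain ⟨n₀, hn₀⟩ := hm_mem
  have hm1 : 1 ≤ m := by
    have h1 : 1 ≤ M n₀.castSucc * M n₀.succ :=
      Nat.one_le_iff_ne_zero.2 (Nat.mul_ne_zero (by have := hM n₀.castSucc; omega)
        (by have := hM n₀.succ; omega))
    exact le_of_le_of_eq h1 hn₀
  constructor
  · -- membership: construct m edge-disjoint paths
    set p : Fin m → LayeredPath N M := fun k i =>
      if h : i.val % 2 = 0 then ⟨k.val % M i, Nat.mod_lt _ (hM i)⟩
      else ⟨(k.val / ((m - 1) / M i + 1)) % M i, Nat.mod_lt _ (hM i)⟩ with hp_def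
    have hp : ∀ (k : Fin m) (i : Fin (N + 1)), (p k i : ℕ) =
        if i.val % 2 = 0 then k.val % M i else (k.val / ((m - 1) / M i + 1)) % M i := by
      intro k i
      by_cases h : i.val % 2 = 0
      · simp [hp_def, h]
      · simp [hp_def, h]
    have hedge := edge_eq_imp hM hm1 hm_le p hp
    have hinj : Function.Injective p := by
      intro k k' h
      exact hedge k k' ⟨0, hN⟩ (by rw [h])
    refine ⟨Finset.image p Finset.univ, ?_, ?_⟩
    · intro x hx y hy hxy n
      simp only [Finset.coe_image, Finset.coe_univ, Set.image_univ, Set.mem_range] at hx hy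
      obtain ⟨k, rfl⟩ := hx
      obtain ⟨k', rfl⟩ := hy
      intro hc
      exact hxy (by rw [hedge k k' n hc])
    · rw [Finset.card_image_of_injective _ hinj, Finset.card_univ, Fintype.card_fin]
  · -- upper bound
    rintro c ⟨S, hS, rfl⟩
    have hcard : S.card ≤ (Finset.univ : Finset (Fin (M n₀.castSucc) × Fin (M n₀.succ))).card := by
      apply Finset.card_le_card_of_injOn (fun q => pathEdge q n₀)
        (fun _ _ => Finset.mem_univ _)
      intro x hx y hy hxy
      by_contra hne'
      exact hS hx hy hne' n₀ hxy
    have hcard' : S.card ≤ M n₀.castSucc * M n₀.succ := by simpa using hcard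
    exact le_of_le_of_eq hcard' hn₀
end

section
/- Given a family of α edge-disjoint paths in a complete layered graph with N+1 stages ending at the final stage with M nodes, and writing α = a*floor(α/M) + (M-a)*ceil(α/M) for the unique appropriate a, one can reassign the last edge of each path to obtain another family of α edge-disjoint paths in which floor(α/M) paths terminate at each of a designated final-stage nodes and ceil(α/M) paths terminate at each of the remaining M-a final-stage nodes, provided α <= M_{N-1} * M. -/
lemma count_mod_card (Mf : ℕ) (hMf : 0 < Mf) (v : ℕ) (hv : v < Mf) (α : ℕ) :
    ((Finset.range α).filter (fun k => k % Mf = v)).card =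
      α / Mf + if v < α % Mf then 1 else 0 := by
  induction α with
  | zero => simp
  | succ n ih =>
    obtain ⟨q, r, hrlt, hn⟩ : ∃ q r, r < Mf ∧ n = Mf * q + r :=
      ⟨n / Mf, n % Mf, Nat.mod_lt _ hMf, (Nat.div_add_mod n Mf).symm⟩
    have hnq : n / Mf = q ∧ n % Mf = r :=
      (Nat.div_mod_unique hMf).mpr ⟨by omega, hrlt⟩
    have hstep : ((Finset.range (n+1)).filter (fun k => k % Mf = v)).card =
        (n / Mf + if v < n % Mf then 1 else 0) + (if n % Mf = v then 1 else 0) := by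
      rw [Finset.range_add_one, Finset.filter_insert, ← ih]
      by_cases hnv : n % Mf = v
      · rw [if_pos hnv, if_pos hnv, Finset.card_insert_of_notMem (by simp)]
      · rw [if_neg hnv, if_neg hnv, Nat.add_zero]
    rw [hstep, hnq.1, hnq.2]
    by_cases hc : r + 1 = Mf
    · have hms : Mf * (q + 1) = Mf * q + Mf := Nat.mul_succ _ _
      have h2 : (n+1) / Mf = q + 1 ∧ (n+1) % Mf = 0 :=
        (Nat.div_mod_unique hMf).mpr ⟨by omega, hMf⟩
      rw [h2.1, h2.2]
      split_ifs <;> omega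
    · have h2 : (n+1) / Mf = q ∧ (n+1) % Mf = r + 1 :=
        (Nat.div_mod_unique hMf).mpr ⟨by omega, by omega⟩
      rw [h2.1, h2.2]
      split_ifs <;> omega



/-- Given a family of `α` edge-disjoint paths ending at a final stage with `Mf` nodes,
with `α = a⌊α/Mf⌋ + (Mf-a)⌈α/Mf⌉` and `α ≤ M_{N-1}·Mf`, the last edges can be reassigned
(keeping all other nodes of each path fixed, and staying edge-disjoint) so that
`⌊α/Mf⌋` paths terminate at each of `a` final-stage nodes and `⌈α/Mf⌉` paths terminate at
each of the remaining `Mf - a` final-stage nodes. -/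
theorem reassign_last_edges (N : ℕ) (hN : 1 ≤ N) (M : Fin (N + 1) → ℕ)
    (S : Finset (LayeredPath N M))
    (hS : (S : Set (LayeredPath N M)).Pairwise EdgeDisjoint)
    (α : ℕ) (hα : S.card = α)
    (hle : α ≤ M ⟨N - 1, by omega⟩ * M (Fin.last N))
    (a : ℕ) (ha : a ≤ M (Fin.last N))
    (hdecomp : α = a * (α / M (Fin.last N)) +
      (M (Fin.last N) - a) * ((α + M (Fin.last N) - 1) / M (Fin.last N))) :
    ∃ g : LayeredPath N M → LayeredPath N M,
      Set.InjOn g S ∧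
      -- the reassignment only changes the final node of each path
      (∀ p ∈ S, ∀ n : Fin (N + 1), n ≠ Fin.last N → g p n = p n) ∧
      -- the new family is again edge-disjoint (hence consists of α paths)
      ((S.image g : Set (LayeredPath N M)).Pairwise EdgeDisjoint) ∧
      (S.image g).card = α ∧
      -- termination counts: ⌊α/Mf⌋ at each node of some set A of size a, ⌈α/Mf⌉ elsewhere
      ∃ A : Finset (Fin (M (Fin.last N))),
        A.card = a ∧
        ∀ v : Fin (M (Fin.last N)),
          ((S.image g).filter fun p => p (Fin.last N) = v).card =
            if v ∈ A then α / M (Fin.last N)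
            else (α + M (Fin.last N) - 1) / M (Fin.last N) := by
  clear hle
  set nl : Fin N := ⟨N - 1, by omega⟩ with hnl
  have els : Fin.last N = nl.succ := by ext; simp [Fin.last, hnl]; omega
  rw [els] at ha hdecomp ⊢
  set Mf : ℕ := M nl.succ with hMfdef
  -- trivial case Mf = 0
  rcases Nat.eq_zero_or_pos Mf with h0 | hMf
  · have hSempty : S = ∅ :=
      Finset.eq_empty_of_forall_notMem (fun p _ => (Fin.cast h0 (p nl.succ)).elim0)
    have hα0 : α = 0 := by rw [← hα, hSempty]; rfl
    have ha0 : a = 0 := by omega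
    refine ⟨id, ?_, ?_, ?_, ?_, ∅, by simp [ha0], ?_⟩
    · simp [hSempty]
    · simp [hSempty]
    · simp [hSempty, Set.pairwise_empty]
    · simp [hSempty, hα0]
    · intro v; exact (Fin.cast h0 v).elim0
  -- main case
  · -- the sorted list of paths
    classical
    set le : LayeredPath N M → LayeredPath N M → Bool :=
      fun p q => decide ((p nl.castSucc : ℕ) ≤ (q nl.castSucc : ℕ)) with hledef
    set L : List (LayeredPath N M) := S.toList.mergeSort le with hL
    have hperm : L.Perm S.toList := List.mergeSort_perm _ _
    have hnodup : L.Nodup := hperm.nodup_iff.mpr S.nodup_toList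
    have hlen : L.length = α := by rw [hperm.length_eq, Finset.length_toList, hα]
    have hmemL : ∀ p, p ∈ L ↔ p ∈ S := fun p => hperm.mem_iff.trans (Finset.mem_toList)
    have hsorted : ∀ i j, (hi : i < L.length) → (hj : j < L.length) → i < j →
        (L[i] nl.castSucc : ℕ) ≤ (L[j] nl.castSucc : ℕ) := by
      have hp := List.pairwise_mergeSort (le := le)
        (fun a b c h1 h2 => by
          simp only [hledef, decide_eq_true_eq] at h1 h2 ⊢; omega)
        (fun a b => by simp only [hledef, Bool.or_eq_true, decide_eq_true_eq]; omega)
        S.toList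
      rw [← hL] at hp
      intro i j hi hj hij
      have := List.pairwise_iff_getElem.mp hp i j hi hj hij
      simpa [hledef] using this
    -- index of a path in the sorted list
    set idx : LayeredPath N M → ℕ := fun p => L.idxOf p with hidx
    have hidx_lt : ∀ p ∈ S, idx p < α := by
      intro p hp; rw [← hlen]; exact List.idxOf_lt_length_iff.mpr ((hmemL p).mpr hp)
    have hget_idx : ∀ p ∈ S, ∀ (h : idx p < L.length), L[idx p] = p := by
      intro p hp h; exact List.getElem_idxOf h
    have hidx_inj : ∀ p ∈ S, ∀ q ∈ S, idx p = idx q → p = q := by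
      intro p hp q hq h
      exact (List.idxOf_inj ((hmemL p).mpr hp)).mp h
    -- distinct last nodes of same-penultimate paths
    have hdist : ∀ p ∈ S, ∀ q ∈ S, p ≠ q → p nl.castSucc = q nl.castSucc →
        p nl.succ ≠ q nl.succ := by
      intro p hp q hq hne hkey heq
      exact hS hp hq hne nl (by unfold pathEdge; rw [hkey, heq])
    -- contiguity of blocks: same-key paths have close indices
    have hblock : ∀ p ∈ S, ∀ q ∈ S, p nl.castSucc = q nl.castSucc →
        idx p ≤ idx q → idx q - idx p < Mf := by
      intro p hp q hq hkey hpq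
      have hiq : idx q < L.length := by rw [hlen]; exact hidx_lt q hq
      have hip : idx p < L.length := by rw [hlen]; exact hidx_lt p hp
      have hcard : (Finset.Icc (idx p) (idx q)).card ≤ Mf := by
        have hmap := Finset.card_le_card_of_injOn
          (s := Finset.Icc (idx p) (idx q))
          (t := (Finset.univ : Finset (Fin (M nl.succ))))
          (fun k => if h : k < L.length then L[k] nl.succ else ⟨0, hMf⟩)
          (fun k _ => Finset.mem_univ _) ?_
        · simpa using hmap
        · intro k1 hk1 k2 hk2 hf
          simp only [Finset.coe_Icc, Set.mem_Icc] at hk1 hk2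
          have hk1l : k1 < L.length := lt_of_le_of_lt hk1.2 hiq
          have hk2l : k2 < L.length := lt_of_le_of_lt hk2.2 hiq
          simp only [dif_pos hk1l, dif_pos hk2l] at hf
          have hkeyk : ∀ k, idx p ≤ k → k ≤ idx q → (hkl : k < L.length) →
              (L[k] nl.castSucc : ℕ) = (p nl.castSucc : ℕ) := by
            intro k hk1' hk2' hkl
            have hmemk : L[k] ∈ S := (hmemL _).mp (List.getElem_mem hkl)
            have hidxk : idx L[k] = k := List.Nodup.idxOf_getElem hnodup k hkl
            have hlow : (p nl.castSucc : ℕ) ≤ (L[k] nl.castSucc : ℕ) := by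
              rcases Nat.eq_or_lt_of_le hk1' with h | h
              · have hep : p = L[k] :=
                  hidx_inj p hp L[k] hmemk (by rw [hidxk, ← h])
                rw [← hep]
              · have := hsorted (idx p) k hip hkl h
                rwa [hget_idx p hp hip] at this
            have hhigh : (L[k] nl.castSucc : ℕ) ≤ (q nl.castSucc : ℕ) := by
              rcases Nat.eq_or_lt_of_le hk2' with h | h
              · have heq' : q = L[k] :=
                  hidx_inj q hq L[k] hmemk (by rw [hidxk, h])
                rw [← heq']
              · have := hsorted k (idx q) hkl hiq h
                rwa [hget_idx q hq hiq] at this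
            have : (q nl.castSucc : ℕ) = (p nl.castSucc : ℕ) := by rw [hkey]
            omega
          have hm1 : L[k1] ∈ S := (hmemL _).mp (List.getElem_mem hk1l)
          have hm2 : L[k2] ∈ S := (hmemL _).mp (List.getElem_mem hk2l)
          have hkk : L[k1] nl.castSucc = L[k2] nl.castSucc := by
            have e1 := hkeyk k1 hk1.1 hk1.2 hk1l
            have e2 := hkeyk k2 hk2.1 hk2.2 hk2l
            exact Fin.ext (by omega)
          have heqL : L[k1] = L[k2] := by
            by_contra hneL
            exact hdist _ hm1 _ hm2 hneL hkk hf
          have e1 : List.idxOf L[k1] L = k1 := List.Nodup.idxOf_getElem hnodup k1 hk1l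
          have e2 : List.idxOf L[k2] L = k2 := List.Nodup.idxOf_getElem hnodup k2 hk2l
          rw [← e1, ← e2, heqL]
      rw [Nat.card_Icc] at hcard
      omega
    -- the color of a path
    have hcolor : ∀ p ∈ S, idx p % Mf < Mf := fun _ _ => Nat.mod_lt _ hMf
    set color : LayeredPath N M → Fin (M nl.succ) :=
      fun p => ⟨idx p % Mf, Nat.mod_lt _ hMf⟩ with hcolordef
    have hcol : ∀ p ∈ S, ∀ q ∈ S, p ≠ q → p nl.castSucc = q nl.castSucc →
        color p ≠ color q := by
      intro p hp q hq hne hkey hceq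
      have hm : idx p % Mf = idx q % Mf := congrArg Fin.val hceq
      have hne' : idx p ≠ idx q := fun h => hne (hidx_inj p hp q hq h)
      rcases Nat.lt_or_ge (idx p) (idx q) with h | h
      · have hb := hblock p hp q hq hkey (le_of_lt h)
        have hdvd : Mf ∣ (idx q - idx p) :=
          (Nat.modEq_iff_dvd' (le_of_lt h)).mp hm
        have := Nat.le_of_dvd (by omega) hdvd
        omega
      · have h' : idx q < idx p := by omega
        have hb := hblock q hq p hp hkey.symm (le_of_lt h')
        have hdvd : Mf ∣ (idx p - idx q) :=
          (Nat.modEq_iff_dvd' (le_of_lt h')).mp hm.symm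
        have := Nat.le_of_dvd (by omega) hdvd
        omega
    -- the reassignment
    set g : LayeredPath N M → LayeredPath N M :=
      fun p => Function.update p nl.succ (color p) with hgdef
    have hg_last : ∀ p, g p nl.succ = color p := by
      intro p; simp [hgdef]
    have hg_other : ∀ p, ∀ n : Fin (N+1), n ≠ nl.succ → g p n = p n := by
      intro p n hn; simp [hgdef, Function.update_of_ne hn]
    have hcsne : nl.castSucc ≠ nl.succ := by
      intro h
      have h' := congrArg Fin.val h
      rw [Fin.coe_castSucc, Fin.val_succ] at h'
      omega
    -- injectivity
    have hinj : ∀ p ∈ S, ∀ q ∈ S, g p = g q → p = q := by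
      intro p hp q hq hgeq
      by_contra hne
      have hkey : p nl.castSucc = q nl.castSucc := by
        rw [← hg_other p _ hcsne, ← hg_other q _ hcsne, hgeq]
      have : color p = color q := by rw [← hg_last p, ← hg_last q, hgeq]
      exact hcol p hp q hq hne hkey this
    -- arithmetic facts
    have hαd : Mf * (α / Mf) + α % Mf = α := Nat.div_add_mod α Mf
    have hrlt : α % Mf < Mf := Nat.mod_lt _ hMf
    have hceil : (α + Mf - 1) / Mf = if α % Mf = 0 then α / Mf else α / Mf + 1 := by
      by_cases hr0 : α % Mf = 0
      · rw [if_pos hr0]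
        have he : α + Mf - 1 = Mf * (α / Mf) + (Mf - 1) := by omega
        rw [he, Nat.mul_add_div hMf, Nat.div_eq_of_lt (show Mf - 1 < Mf by omega), add_zero]
      · rw [if_neg hr0]
        have hms : Mf * (α / Mf + 1) = Mf * (α / Mf) + Mf := Nat.mul_succ _ _
        have he : α + Mf - 1 = Mf * (α / Mf + 1) + (α % Mf - 1) := by omega
        rw [he, Nat.mul_add_div hMf, Nat.div_eq_of_lt (show α % Mf - 1 < Mf by omega), add_zero]
    -- the set of "floor" nodes
    set B : Finset (Fin (M nl.succ)) :=
      Finset.univ.filter (fun v => α % Mf ≤ (v : ℕ)) with hBdef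
    have hBcard : B.card = Mf - α % Mf := by
      rw [hBdef, ← Finset.card_range (Mf - α % Mf)]
      symm
      refine Finset.card_bij
        (fun k (hk : k ∈ Finset.range (Mf - α % Mf)) =>
          (⟨k + α % Mf, by have := Finset.mem_range.mp hk; omega⟩ : Fin (M nl.succ)))
        ?_ ?_ ?_
      · intro k hk
        exact Finset.mem_filter.mpr ⟨Finset.mem_univ _, by simp⟩
      · intro k1 h1 k2 h2 h
        have := congrArg Fin.val h
        simp only [] at this
        omega
      · intro v hv
        have hvr := (Finset.mem_filter.mp hv).2
        have hvlt : (v : ℕ) < Mf := v.isLt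
        refine ⟨(v : ℕ) - α % Mf, Finset.mem_range.mpr (by omega), Fin.ext ?_⟩
        simp only []
        omega
    have hale : a ≤ Mf - α % Mf := by
      by_cases hr0 : α % Mf = 0
      · omega
      · rw [hceil, if_neg hr0] at hdecomp
        have h1 : a * (α / Mf) + (Mf - a) * (α / Mf) = Mf * (α / Mf) := by
          rw [← Nat.add_mul, Nat.add_sub_cancel' ha]
        have h2 : (Mf - a) * (α / Mf + 1) = (Mf - a) * (α / Mf) + (Mf - a) :=
          Nat.mul_succ _ _
        omega
    obtain ⟨A, hAB, hAcard⟩ := Finset.exists_subset_card_eq (s := B) (n := a) (by rw [hBcard]; exact hale)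
    -- assemble
    refine ⟨g, ?_, ?_, ?_, ?_, A, hAcard, ?_⟩
    · intro p hp q hq h
      exact hinj p (Finset.mem_coe.mp hp) q (Finset.mem_coe.mp hq) h
    · intro p _ n hn
      exact hg_other p n hn
    · intro x hx y hy hxy
      obtain ⟨p, hp, rfl⟩ := Finset.mem_image.mp (Finset.mem_coe.mp hx)
      obtain ⟨q, hq, rfl⟩ := Finset.mem_image.mp (Finset.mem_coe.mp hy)
      have hne : p ≠ q := fun h => hxy (by rw [h])
      intro n hcontra
      by_cases hn : n = nl
      · subst hn
        have h1 : g p nl.castSucc = g q nl.castSucc := congrArg Prod.fst hcontra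
        have h2 : g p nl.succ = g q nl.succ := congrArg Prod.snd hcontra
        have hkey : p nl.castSucc = q nl.castSucc := by
          rw [← hg_other p _ hcsne, ← hg_other q _ hcsne]; exact h1
        have hcoleq : color p = color q := by
          rw [← hg_last p, ← hg_last q]; exact h2
        exact hcol p hp q hq hne hkey hcoleq
      · have hc1 : n.castSucc ≠ nl.succ := by
          intro h
          have h' := congrArg Fin.val h
          rw [Fin.coe_castSucc, Fin.val_succ] at h'
          have := n.isLt
          simp [hnl] at h'
          omega
        have hc2 : n.succ ≠ nl.succ := fun h => hn (Fin.succ_injective _ h)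
        apply hS hp hq hne n
        have e1 : pathEdge (g p) n = pathEdge p n := by
          unfold pathEdge; rw [hg_other p _ hc1, hg_other p _ hc2]
        have e2 : pathEdge (g q) n = pathEdge q n := by
          unfold pathEdge; rw [hg_other q _ hc1, hg_other q _ hc2]
        rw [← e1, ← e2]; exact hcontra
    · rw [Finset.card_image_of_injOn
        (fun p hp q hq h => hinj p (Finset.mem_coe.mp hp) q (Finset.mem_coe.mp hq) h)]
      exact hα
    · intro v
      have himg : ((S.image g).filter fun p => p nl.succ = v) =
          (S.filter fun p => g p nl.succ = v).image g := by
        ext x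
        simp only [Finset.mem_filter, Finset.mem_image]
        constructor
        · rintro ⟨⟨p, hp, rfl⟩, hv⟩; exact ⟨p, ⟨hp, hv⟩, rfl⟩
        · rintro ⟨p, ⟨hp, hv⟩, rfl⟩; exact ⟨⟨p, hp, rfl⟩, hv⟩
      have hcard1 : ((S.image g).filter fun p => p nl.succ = v).card =
          (S.filter fun p => g p nl.succ = v).card := by
        rw [himg]
        exact Finset.card_image_of_injOn (fun p hp q hq h =>
          hinj p (Finset.filter_subset _ _ (Finset.mem_coe.mp hp))
            q (Finset.filter_subset _ _ (Finset.mem_coe.mp hq)) h)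
      have hcard2 : (S.filter fun p => g p nl.succ = v).card =
          ((Finset.range α).filter fun k => k % Mf = (v : ℕ)).card := by
        apply Finset.card_bij (fun p _ => idx p)
        · intro p hp
          obtain ⟨hpS, hpv⟩ := Finset.mem_filter.mp hp
          refine Finset.mem_filter.mpr ⟨Finset.mem_range.mpr (hidx_lt p hpS), ?_⟩
          have hcv : color p = v := by rw [← hg_last p]; exact hpv
          exact congrArg Fin.val hcv
        · intro p hp q hq h
          exact hidx_inj p (Finset.mem_of_mem_filter p hp) q (Finset.mem_of_mem_filter q hq) h
        · intro k hk
          obtain ⟨hkr, hkm⟩ := Finset.mem_filter.mp hk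
          have hkl : k < L.length := by rw [hlen]; exact Finset.mem_range.mp hkr
          have hmemk : L[k] ∈ S := (hmemL _).mp (List.getElem_mem hkl)
          have hidxk : idx L[k] = k := List.Nodup.idxOf_getElem hnodup k hkl
          refine ⟨L[k], Finset.mem_filter.mpr ⟨hmemk, ?_⟩, hidxk⟩
          rw [hg_last]
          exact Fin.ext (by rw [show ((color L[k] : Fin (M nl.succ)) : ℕ) = idx L[k] % Mf from rfl, hidxk]; exact hkm)
      have hcount := count_mod_card Mf hMf (v : ℕ) v.isLt α
      rw [hcard1, hcard2, hcount]
      clear himg hcard1 hcard2 hcount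
      by_cases hvA : v ∈ A
      · rw [if_pos hvA]
        have hvB := hAB hvA
        have hvr : α % Mf ≤ (v : ℕ) := (Finset.mem_filter.mp hvB).2
        have hnlt : ¬((v : ℕ) < α % Mf) := by omega
        rw [if_neg hnlt, Nat.add_zero]
      · rw [if_neg hvA, hceil]
        by_cases hr0 : α % Mf = 0
        · have hnlt : ¬((v : ℕ) < α % Mf) := by omega
          rw [if_pos hr0, if_neg hnlt, Nat.add_zero]
        · rw [if_neg hr0]
          have hAeqB : A = B := by
            apply Finset.eq_of_subset_of_card_le hAB
            rw [hBcard, hAcard]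
            rw [hceil, if_neg hr0] at hdecomp
            have h1 : a * (α / Mf) + (Mf - a) * (α / Mf) = Mf * (α / Mf) := by
              rw [← Nat.add_mul, Nat.add_sub_cancel' ha]
            have h2 : (Mf - a) * (α / Mf + 1) = (Mf - a) * (α / Mf) + (Mf - a) :=
              Nat.mul_succ _ _
            omega
          have hvB : v ∉ B := by rw [← hAeqB]; exact hvA
          have hvr : (v : ℕ) < α % Mf := by
            by_contra hcon
            exact hvB (Finset.mem_filter.mpr ⟨Finset.mem_univ _, by omega⟩)
          rw [if_pos hvr]
end

section
/- Let h_0,...,h_{N-1} be independent standard complex Gaussian random variables and let SNR > 0. Then P(prod_{n=0}^{N-1} |h_n|^2 <= SNR^{-(1-r)}) is exponentially equal to SNR^{-(1-r)} as SNR tends to infinity, for any fixed 0 <= r < 1; i.e., the limit as SNR -> infinity of log P(prod |h_n|^2 <= SNR^{-(1-r)}) / log SNR equals -(1-r). -/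
open MeasureTheory ProbabilityTheory Filter

/-- The standard circularly symmetric complex Gaussian distribution `CN(0,1)`:
real and imaginary parts are independent real Gaussians of mean `0` and variance `1/2`. -/
noncomputable def stdComplexGaussian : Measure ℂ :=
  ((gaussianReal 0 (1 / 2)).prod (gaussianReal 0 (1 / 2))).map fun p => ⟨p.1, p.2⟩

section Aux

open Real ENNReal

lemma measurable_mk' : Measurable fun p : ℝ × ℝ => (⟨p.1, p.2⟩ : ℂ) :=
  Complex.measurableEquivRealProd.symm.measurable

lemma norm_sq_mk (x y : ℝ) : ‖(⟨x, y⟩ : ℂ)‖ ^ 2 = x ^ 2 + y ^ 2 := by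
  rw [Complex.sq_norm, Complex.normSq_mk]; ring

instance : IsProbabilityMeasure stdComplexGaussian := by
  rw [stdComplexGaussian]
  exact Measure.isProbabilityMeasure_map measurable_mk'.aemeasurable

lemma gaussianPDF_half (x : ℝ) :
    gaussianPDF 0 (1 / 2) x = ENNReal.ofReal ((Real.sqrt π)⁻¹ * Real.exp (-(x ^ 2))) := by
  unfold gaussianPDF gaussianPDFReal
  norm_num
  congr 1
  rw [mul_left_comm, ENNReal.mul_inv_cancel (by simp) ENNReal.ofReal_ne_top, mul_one]

lemma pdf_prod_eq (x y : ℝ) :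
    ENNReal.ofReal ((Real.sqrt π)⁻¹ * Real.exp (-(x ^ 2)))
      * ENNReal.ofReal ((Real.sqrt π)⁻¹ * Real.exp (-(y ^ 2)))
      = ENNReal.ofReal (π⁻¹ * Real.exp (-(x ^ 2 + y ^ 2))) := by
  rw [← ENNReal.ofReal_mul (by positivity)]
  congr 1
  rw [show (Real.sqrt π)⁻¹ * Real.exp (-(x ^ 2)) * ((Real.sqrt π)⁻¹ * Real.exp (-(y ^ 2)))
      = ((Real.sqrt π) * (Real.sqrt π))⁻¹ * (Real.exp (-(x ^ 2)) * Real.exp (-(y ^ 2))) from by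
        rw [mul_inv]; ring,
    Real.mul_self_sqrt Real.pi_pos.le, ← Real.exp_add]
  ring_nf

lemma lintegral_stdComplexGaussian (f : ℂ → ℝ≥0∞) (hf : Measurable f) :
    ∫⁻ z, f z ∂stdComplexGaussian
      = ∫⁻ p : ℝ × ℝ, ENNReal.ofReal (π⁻¹ * Real.exp (-(p.1 ^ 2 + p.2 ^ 2))) * f ⟨p.1, p.2⟩ := by
  have hG : gaussianReal 0 (1 / 2) = volume.withDensity (gaussianPDF 0 (1 / 2)) :=
    if_neg (by norm_num)
  have hpdfm : Measurable (gaussianPDF 0 (1 / 2)) := measurable_gaussianPDF _ _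
  have hfm : Measurable fun p : ℝ × ℝ => f ⟨p.1, p.2⟩ := hf.comp measurable_mk'
  have hfy : ∀ x : ℝ, Measurable fun y : ℝ => f ⟨x, y⟩ := fun x =>
    hf.comp (measurable_mk'.comp measurable_prodMk_left)
  have hyx : ∀ x : ℝ, Measurable fun y : ℝ => gaussianPDF 0 (1 / 2) y * f ⟨x, y⟩ := fun x =>
    hpdfm.mul (hfy x)
  have hwm : Measurable fun p : ℝ × ℝ => ENNReal.ofReal (π⁻¹ * Real.exp (-(p.1 ^ 2 + p.2 ^ 2))) := by
    apply Measurable.ennreal_ofReal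
    fun_prop
  have huncur : Measurable (Function.uncurry fun x y : ℝ => gaussianPDF 0 (1 / 2) y * f ⟨x, y⟩) :=
    (hpdfm.comp measurable_snd).mul hfm
  rw [stdComplexGaussian, lintegral_map hf measurable_mk',
    lintegral_prod _ hfm.aemeasurable]
  have hinner : ∀ x : ℝ, ∫⁻ y, f ⟨x, y⟩ ∂gaussianReal 0 (1 / 2)
      = ∫⁻ y, gaussianPDF 0 (1 / 2) y * f ⟨x, y⟩ := by
    intro x
    rw [hG, lintegral_withDensity_eq_lintegral_mul _ hpdfm (hfy x)]
    rfl
  simp_rw [hinner]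
  rw [hG, lintegral_withDensity_eq_lintegral_mul _ hpdfm
    (Measurable.lintegral_prod_right huncur)]
  rw [Measure.volume_eq_prod, lintegral_prod (fun p : ℝ × ℝ => ENNReal.ofReal (π⁻¹ * Real.exp (-(p.1 ^ 2 + p.2 ^ 2))) * f ⟨p.1, p.2⟩) (hwm.mul hfm).aemeasurable]
  apply lintegral_congr
  intro x
  simp only [Pi.mul_apply]
  rw [← lintegral_const_mul _ (hyx x)]
  apply lintegral_congr
  intro y
  rw [← mul_assoc, gaussianPDF_half, gaussianPDF_half, pdf_prod_eq]

end Aux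
section Aux2

open Real ENNReal

lemma measurable_normsq : Measurable fun z : ℂ => ‖z‖ ^ 2 :=
  (measurable_norm).pow_const 2

lemma volume_sq_le (t : ℝ) (ht : 0 ≤ t) :
    volume {p : ℝ × ℝ | p.1 ^ 2 + p.2 ^ 2 ≤ t} = ENNReal.ofReal t * ENNReal.ofReal π := by
  have hSm : MeasurableSet {p : ℝ × ℝ | p.1 ^ 2 + p.2 ^ 2 ≤ t} :=
    measurableSet_le (by fun_prop) measurable_const
  have hpre : Complex.measurableEquivRealProd ⁻¹' {p : ℝ × ℝ | p.1 ^ 2 + p.2 ^ 2 ≤ t}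
      = Metric.closedBall (0 : ℂ) (Real.sqrt t) := by
    ext z
    simp only [Set.mem_preimage, Complex.measurableEquivRealProd_apply, Set.mem_setOf_eq,
      Metric.mem_closedBall, Complex.dist_eq, sub_zero]
    constructor
    · intro hz
      exact (Real.le_sqrt (norm_nonneg z) ht).mpr (by
        rw [Complex.sq_norm, Complex.normSq_apply]; nlinarith)
    · intro hz
      have := (Real.le_sqrt (norm_nonneg z) ht).mp hz
      rw [Complex.sq_norm, Complex.normSq_apply] at this
      nlinarith
  have := Complex.volume_preserving_equiv_real_prod.measure_preimage hSm.nullMeasurableSet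
  rw [hpre] at this
  rw [← this, Complex.volume_closedBall, ← ENNReal.ofReal_pow (Real.sqrt_nonneg t),
    Real.sq_sqrt ht]
  congr 1
  rw [← ENNReal.ofReal_coe_nnreal, NNReal.coe_real_pi]

lemma nu_upper (t : ℝ) (ht : 0 ≤ t) :
    stdComplexGaussian {z : ℂ | ‖z‖ ^ 2 ≤ t} ≤ ENNReal.ofReal t := by
  have hS : MeasurableSet {z : ℂ | ‖z‖ ^ 2 ≤ t} :=
    measurableSet_le measurable_normsq measurable_const
  rw [← lintegral_indicator_one hS, lintegral_stdComplexGaussian _ (measurable_one.indicator hS)]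
  have hb : ∀ p : ℝ × ℝ,
      ENNReal.ofReal (π⁻¹ * Real.exp (-(p.1 ^ 2 + p.2 ^ 2)))
        * ({z : ℂ | ‖z‖ ^ 2 ≤ t}).indicator 1 ⟨p.1, p.2⟩
      ≤ ENNReal.ofReal π⁻¹ * ({p : ℝ × ℝ | p.1 ^ 2 + p.2 ^ 2 ≤ t}).indicator 1 p := by
    intro p
    have hind : ({z : ℂ | ‖z‖ ^ 2 ≤ t}).indicator (1 : ℂ → ℝ≥0∞) ⟨p.1, p.2⟩
        = ({p : ℝ × ℝ | p.1 ^ 2 + p.2 ^ 2 ≤ t}).indicator 1 p := by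
      by_cases hp : p.1 ^ 2 + p.2 ^ 2 ≤ t
      · rw [Set.indicator_of_mem (show (⟨p.1, p.2⟩ : ℂ) ∈ {z : ℂ | ‖z‖ ^ 2 ≤ t} from by
            rw [Set.mem_setOf_eq, norm_sq_mk]; exact hp),
          Set.indicator_of_mem (by simpa using hp)]
        rfl
      · rw [Set.indicator_of_notMem (show (⟨p.1, p.2⟩ : ℂ) ∉ {z : ℂ | ‖z‖ ^ 2 ≤ t} from by
            simp only [Set.mem_setOf_eq, norm_sq_mk]; exact hp),
          Set.indicator_of_notMem (by simpa using hp)]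
    rw [hind]
    apply mul_le_mul_left
    apply ENNReal.ofReal_le_ofReal
    have : Real.exp (-(p.1 ^ 2 + p.2 ^ 2)) ≤ 1 := Real.exp_le_one_iff.mpr (neg_nonpos.mpr (by positivity))
    nlinarith [Real.pi_pos, inv_nonneg.mpr Real.pi_pos.le]
  calc ∫⁻ p : ℝ × ℝ, ENNReal.ofReal (π⁻¹ * Real.exp (-(p.1 ^ 2 + p.2 ^ 2)))
        * ({z : ℂ | ‖z‖ ^ 2 ≤ t}).indicator 1 ⟨p.1, p.2⟩
      ≤ ∫⁻ p : ℝ × ℝ, ENNReal.ofReal π⁻¹ * ({p : ℝ × ℝ | p.1 ^ 2 + p.2 ^ 2 ≤ t}).indicator 1 p :=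
        lintegral_mono hb
    _ = ENNReal.ofReal π⁻¹ * volume {p : ℝ × ℝ | p.1 ^ 2 + p.2 ^ 2 ≤ t} := by
        rw [lintegral_const_mul _ (measurable_one.indicator
          (measurableSet_le (by fun_prop) measurable_const)), lintegral_indicator_one
          (measurableSet_le (by fun_prop) measurable_const)]
    _ = ENNReal.ofReal t := by
        rw [volume_sq_le t ht, ← mul_assoc, ← ENNReal.ofReal_mul (by positivity), ← ENNReal.ofReal_mul (by positivity)]
        rw [show π⁻¹ * t * π = t * (π⁻¹ * π) from by ring, inv_mul_cancel₀ Real.pi_pos.ne', mul_one]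

lemma nu_lower (t : ℝ) (ht0 : 0 < t) (ht1 : t ≤ 1) :
    ENNReal.ofReal (Real.exp (-1) * t) ≤ stdComplexGaussian {z : ℂ | ‖z‖ ^ 2 ≤ t} := by
  have hS : MeasurableSet {z : ℂ | ‖z‖ ^ 2 ≤ t} :=
    measurableSet_le measurable_normsq measurable_const
  have hSm : MeasurableSet {p : ℝ × ℝ | p.1 ^ 2 + p.2 ^ 2 ≤ t} :=
    measurableSet_le (by fun_prop) measurable_const
  rw [← lintegral_indicator_one hS, lintegral_stdComplexGaussian _ (measurable_one.indicator hS)]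
  have hb : ∀ p : ℝ × ℝ,
      ENNReal.ofReal (π⁻¹ * Real.exp (-1)) * ({p : ℝ × ℝ | p.1 ^ 2 + p.2 ^ 2 ≤ t}).indicator 1 p
      ≤ ENNReal.ofReal (π⁻¹ * Real.exp (-(p.1 ^ 2 + p.2 ^ 2)))
        * ({z : ℂ | ‖z‖ ^ 2 ≤ t}).indicator 1 ⟨p.1, p.2⟩ := by
    intro p
    by_cases hp : p.1 ^ 2 + p.2 ^ 2 ≤ t
    · rw [Set.indicator_of_mem (by simpa using hp),
        Set.indicator_of_mem (show (⟨p.1, p.2⟩ : ℂ) ∈ {z : ℂ | ‖z‖ ^ 2 ≤ t} from by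
          rw [Set.mem_setOf_eq, norm_sq_mk]; exact hp)]
      apply mul_le_mul_left
      apply ENNReal.ofReal_le_ofReal
      have he : Real.exp (-1) ≤ Real.exp (-(p.1 ^ 2 + p.2 ^ 2)) :=
        Real.exp_le_exp.mpr (by nlinarith)
      nlinarith [inv_nonneg.mpr Real.pi_pos.le]
    · rw [Set.indicator_of_notMem (by simpa using hp)]
      simp
  calc ENNReal.ofReal (Real.exp (-1) * t)
      = ENNReal.ofReal (π⁻¹ * Real.exp (-1)) * volume {p : ℝ × ℝ | p.1 ^ 2 + p.2 ^ 2 ≤ t} := by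
        rw [volume_sq_le t ht0.le, ← mul_assoc, ← ENNReal.ofReal_mul (by positivity),
          ← ENNReal.ofReal_mul (by positivity)]
        congr 1
        rw [show π⁻¹ * Real.exp (-1) * t * π = (π⁻¹ * π) * (Real.exp (-1) * t) from by ring,
          inv_mul_cancel₀ Real.pi_pos.ne', one_mul]
    _ = ∫⁻ p : ℝ × ℝ, ENNReal.ofReal (π⁻¹ * Real.exp (-1))
          * ({p : ℝ × ℝ | p.1 ^ 2 + p.2 ^ 2 ≤ t}).indicator 1 p := by
        rw [lintegral_const_mul _ (measurable_one.indicator hSm), lintegral_indicator_one hSm]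
    _ ≤ _ := lintegral_mono hb

end Aux2
section Aux3

open Real ENNReal

lemma measurable_gfun (a : ℝ) :
    Measurable fun z : ℂ => (ENNReal.ofReal (‖z‖ ^ 2)) ^ (-a) :=
  (measurable_normsq.ennreal_ofReal).pow_const (-a)

lemma rpow_neg_anti {x y : ℝ≥0∞} {a : ℝ} (ha : 0 ≤ a) (hxy : x ≤ y) :
    y ^ (-a) ≤ x ^ (-a) := by
  rw [ENNReal.rpow_neg, ENNReal.rpow_neg]
  exact ENNReal.inv_le_inv.mpr (ENNReal.rpow_le_rpow hxy ha)

lemma moment_ne_top {a : ℝ} (ha0 : 0 < a) (ha1 : a < 1) :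
    ∫⁻ z, (ENNReal.ofReal (‖z‖ ^ 2)) ^ (-a) ∂stdComplexGaussian ≠ ∞ := by
  set ν := stdComplexGaussian
  set g : ℂ → ℝ≥0∞ := fun z => (ENNReal.ofReal (‖z‖ ^ 2)) ^ (-a) with hg
  set q : ℝ := (2 : ℝ)⁻¹ with hq
  set B : Set ℂ := {z | 1 < ‖z‖ ^ 2} with hB
  set Z : Set ℂ := {z | ‖z‖ ^ 2 ≤ 0} with hZ
  set A : ℕ → Set ℂ := fun k => {z | q ^ (k + 1) < ‖z‖ ^ 2 ∧ ‖z‖ ^ 2 ≤ q ^ k} with hA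
  have hq1 : q < 1 := by norm_num [hq]
  have hqpos : 0 < q := by norm_num [hq]
  -- covering
  have hcover : (Set.univ : Set ℂ) ⊆ B ∪ (Z ∪ ⋃ k, A k) := by
    intro z _
    by_cases h1 : 1 < ‖z‖ ^ 2
    · exact Or.inl h1
    by_cases h0 : ‖z‖ ^ 2 ≤ 0
    · exact Or.inr (Or.inl h0)
    push_neg at h1 h0
    right; right
    obtain ⟨n, hn⟩ := exists_pow_lt_of_lt_one h0 hq1
    have hex : ∃ n, q ^ n < ‖z‖ ^ 2 := ⟨n, hn⟩
    classical
    let m := Nat.find hex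
    have hm : q ^ m < ‖z‖ ^ 2 := Nat.find_spec hex
    have hm0 : m ≠ 0 := by
      intro h
      rw [h, pow_zero] at hm
      exact absurd hm (not_lt.mpr h1)
    obtain ⟨k, hk⟩ := Nat.exists_eq_succ_of_ne_zero hm0
    refine Set.mem_iUnion.mpr ⟨k, ?_, ?_⟩
    · rw [show k + 1 = m from hk.symm]; exact hm
    · have := Nat.find_min hex (m := k) (by omega)
      exact not_lt.mp this
  -- bound
  have hnu_upper := nu_upper
  have key : ∫⁻ z, g z ∂ν ≤ 1 + (0 + ∑' k, ENNReal.ofReal ((2:ℝ) ^ a * ((2:ℝ) ^ (a - 1)) ^ k)) := by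
    have h1 : ∫⁻ z, g z ∂ν = ∫⁻ z in Set.univ, g z ∂ν := (setLIntegral_univ _).symm
    rw [h1]
    refine le_trans (lintegral_mono_set hcover) ?_
    refine le_trans (lintegral_union_le _ _ _) ?_
    gcongr
    · -- over B
      refine le_trans (setLIntegral_mono (g := fun _ => (1:ℝ≥0∞)) measurable_const ?_) ?_
      · intro z hz
        show g z ≤ 1
        rw [hg]
        calc (ENNReal.ofReal (‖z‖ ^ 2)) ^ (-a) ≤ (1 : ℝ≥0∞) ^ (-a) :=
              rpow_neg_anti ha0.le (by
                rw [show (1 : ℝ≥0∞) = ENNReal.ofReal 1 from by simp]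
                exact ENNReal.ofReal_le_ofReal (le_of_lt hz))
          _ = 1 := ENNReal.one_rpow _
      · rw [setLIntegral_const]
        calc (1 : ℝ≥0∞) * ν B ≤ 1 * 1 := by
              gcongr
              exact prob_le_one
          _ = 1 := by simp
    refine le_trans (lintegral_union_le _ _ _) ?_
    gcongr
    · -- over Z
      have hZ0 : ν Z = 0 := by
        refine le_antisymm ?_ (by simp)
        exact (nu_upper 0 le_rfl).trans (by simp)
      rw [setLIntegral_measure_zero _ _ hZ0]
    · -- over the union
      refine le_trans (lintegral_iUnion_le _ _) ?_
      apply ENNReal.tsum_le_tsum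
      intro k
      have hbound : ∀ z ∈ A k, g z ≤ ENNReal.ofReal ((q ^ (k + 1)) ^ (-a)) := by
        intro z hz
        rw [hg]
        have h1 : ENNReal.ofReal (q ^ (k + 1)) ≤ ENNReal.ofReal (‖z‖ ^ 2) :=
          ENNReal.ofReal_le_ofReal hz.1.le
        refine le_trans (rpow_neg_anti ha0.le h1) ?_
        rw [ENNReal.ofReal_rpow_of_pos (by positivity)]
      refine le_trans (setLIntegral_mono (g := fun _ => ENNReal.ofReal ((q ^ (k + 1)) ^ (-a))) measurable_const hbound) ?_
      rw [setLIntegral_const]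
      have hAk : ν (A k) ≤ ENNReal.ofReal (q ^ k) := by
        refine le_trans (measure_mono ?_) (nu_upper (q ^ k) (by positivity))
        intro z hz
        exact hz.2
      calc ENNReal.ofReal ((q ^ (k + 1)) ^ (-a)) * ν (A k)
          ≤ ENNReal.ofReal ((q ^ (k + 1)) ^ (-a)) * ENNReal.ofReal (q ^ k) := by gcongr
        _ = ENNReal.ofReal ((q ^ (k + 1)) ^ (-a) * q ^ k) := by
            rw [← ENNReal.ofReal_mul (by positivity)]
        _ = ENNReal.ofReal ((2:ℝ) ^ a * ((2:ℝ) ^ (a - 1)) ^ k) := by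
            congr 1
            have hqe : ∀ n : ℕ, q ^ n = (2:ℝ) ^ (-(n:ℝ)) := by
              intro n
              rw [hq, ← Real.rpow_natCast (2:ℝ)⁻¹ n, Real.inv_rpow (by norm_num),
                ← Real.rpow_neg (by norm_num)]
            rw [hqe (k+1), hqe k, ← Real.rpow_natCast ((2:ℝ) ^ (a-1)) k,
              ← Real.rpow_mul (by norm_num), ← Real.rpow_mul (by norm_num),
              ← Real.rpow_add (by norm_num), ← Real.rpow_add (by norm_num)]
            congr 1
            push_cast
            ring
  -- finiteness of the geometric sum
  refine ne_top_of_le_ne_top ?_ key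
  have hsum : ∑' k, ENNReal.ofReal ((2:ℝ) ^ a * ((2:ℝ) ^ (a - 1)) ^ k)
      = ENNReal.ofReal ((2:ℝ) ^ a) * ∑' k : ℕ, (ENNReal.ofReal ((2:ℝ) ^ (a - 1))) ^ k := by
    rw [← ENNReal.tsum_mul_left]
    congr 1
    ext k
    rw [← ENNReal.ofReal_pow (by positivity), ← ENNReal.ofReal_mul (by positivity)]
  rw [hsum, ENNReal.tsum_geometric]
  have hlt1 : ENNReal.ofReal ((2:ℝ) ^ (a - 1)) < 1 := by
    rw [show (1 : ℝ≥0∞) = ENNReal.ofReal 1 from by simp]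
    exact (ENNReal.ofReal_lt_ofReal_iff (by norm_num)).mpr
      (Real.rpow_lt_one_of_one_lt_of_neg (by norm_num) (by linarith))
  have hne : (1 : ℝ≥0∞) - ENNReal.ofReal ((2:ℝ) ^ (a - 1)) ≠ 0 := by
    intro hcontra
    rw [tsub_eq_zero_iff_le] at hcontra
    exact absurd hcontra (not_le.mpr hlt1)
  apply ENNReal.add_ne_top.mpr
  constructor
  · exact one_ne_top
  apply ENNReal.add_ne_top.mpr
  constructor
  · simp
  exact ENNReal.mul_ne_top ENNReal.ofReal_ne_top (ENNReal.inv_ne_top.mpr hne)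

end Aux3
section Aux4

open Real ENNReal

lemma lintegral_prod_of_iIndepFun {Ω : Type*} [MeasurableSpace Ω] {μ : Measure Ω}
    [IsProbabilityMeasure μ] {N : ℕ} (g : Fin N → Ω → ℝ≥0∞) (hgm : ∀ n, Measurable (g n))
    (hg : iIndepFun g μ) (s : Finset (Fin N)) :
    ∫⁻ ω, ∏ n ∈ s, g n ω ∂μ = ∏ n ∈ s, ∫⁻ ω, g n ω ∂μ := by
  classical
  induction s using Finset.induction with
  | empty => simp
  | @insert i s hi ih =>
    rw [Finset.prod_insert hi]
    have hprodm : Measurable fun ω => ∏ n ∈ s, g n ω :=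
      s.measurable_prod fun n _ => hgm n
    have hprodm' : Measurable (∏ j ∈ s, g j) := by
      have hpe : (∏ j ∈ s, g j) = fun ω => ∏ j ∈ s, g j ω := by
        funext ω; simp [Finset.prod_apply]
      rw [hpe]; exact hprodm
    have hind : IndepFun (∏ j ∈ s, g j) (g i) μ :=
      hg.indepFun_finset_prod_of_notMem hgm hi
    have hmul := lintegral_mul_eq_lintegral_mul_lintegral_of_indepFun
      hprodm' (hgm i) hind
    have heq : ∀ ω, ((∏ j ∈ s, g j) * g i) ω = ∏ n ∈ Insert.insert i s, g n ω := by
      intro ω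
      simp [Finset.prod_apply, Finset.prod_insert hi, mul_comm]
    calc ∫⁻ ω, ∏ n ∈ Insert.insert i s, g n ω ∂μ
        = ∫⁻ ω, ((∏ j ∈ s, g j) * g i) ω ∂μ := by
          apply lintegral_congr; intro ω; rw [heq]
      _ = (∫⁻ ω, (∏ j ∈ s, g j) ω ∂μ) * ∫⁻ ω, g i ω ∂μ := hmul
      _ = (∏ n ∈ s, ∫⁻ ω, g n ω ∂μ) * ∫⁻ ω, g i ω ∂μ := by
          rw [show (∫⁻ ω, (∏ j ∈ s, g j) ω ∂μ) = ∫⁻ ω, ∏ j ∈ s, g j ω ∂μ from by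
            apply lintegral_congr; intro ω; simp [Finset.prod_apply], ih]
      _ = (∫⁻ ω, g i ω ∂μ) * ∏ n ∈ s, ∫⁻ ω, g n ω ∂μ := mul_comm _ _

end Aux4
section Main

open Real ENNReal

variable {Ω : Type*} [MeasurableSpace Ω] {μ : Measure Ω} [IsProbabilityMeasure μ]

lemma markov_upper {N : ℕ} (h : Fin N → Ω → ℂ) (hmeas : ∀ n, Measurable (h n))
    (hindep : iIndepFun h μ)
    (hdist : ∀ n, μ.map (h n) = stdComplexGaussian)
    {a : ℝ} (ha0 : 0 < a) (ha1 : a < 1) {ε : ℝ} (hε : 0 < ε) :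
    μ {ω | ∏ n, ‖h n ω‖ ^ 2 ≤ ε}
      ≤ (∫⁻ z, (ENNReal.ofReal (‖z‖ ^ 2)) ^ (-a) ∂stdComplexGaussian) ^ N
        * (ENNReal.ofReal ε) ^ a := by
  classical
  set Ca := ∫⁻ z, (ENNReal.ofReal (‖z‖ ^ 2)) ^ (-a) ∂stdComplexGaussian with hCa
  set g : ℂ → ℝ≥0∞ := fun z => (ENNReal.ofReal (‖z‖ ^ 2)) ^ (-a) with hgdef
  set G : Fin N → Ω → ℝ≥0∞ := fun n => g ∘ h n with hGdef
  have hGm : ∀ n, Measurable (G n) := fun n => (measurable_gfun a).comp (hmeas n)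
  have hGind : iIndepFun G μ :=
    hindep.comp (fun _ => g) (fun _ => measurable_gfun a)
  set F : Ω → ℝ≥0∞ := fun ω => ∏ n, G n ω with hFdef
  have hFm : Measurable F := Finset.measurable_prod Finset.univ fun n _ => hGm n
  have hFint : ∫⁻ ω, F ω ∂μ = Ca ^ N := by
    rw [hFdef]
    rw [lintegral_prod_of_iIndepFun G hGm hGind Finset.univ]
    have hone : ∀ n : Fin N, ∫⁻ ω, G n ω ∂μ = Ca := by
      intro n
      rw [hGdef]
      have := lintegral_map (measurable_gfun a) (hmeas n) (μ := μ) (f := g)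
      rw [hdist n] at this
      show ∫⁻ ω, g (h n ω) ∂μ = Ca
      rw [hCa]
      exact this.symm
    calc ∏ n : Fin N, ∫⁻ ω, G n ω ∂μ = ∏ _n : Fin N, Ca := by
          apply Finset.prod_congr rfl; intro n _; exact hone n
      _ = Ca ^ N := by rw [Finset.prod_const, Finset.card_univ, Fintype.card_fin]
  have hsub : {ω | ∏ n, ‖h n ω‖ ^ 2 ≤ ε} ⊆ {ω | (ENNReal.ofReal ε) ^ (-a) ≤ F ω} := by
    intro ω hω
    have h1 : ENNReal.ofReal (∏ n, ‖h n ω‖ ^ 2) = ∏ n, ENNReal.ofReal (‖h n ω‖ ^ 2) :=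
      ENNReal.ofReal_prod_of_nonneg fun _ _ => by positivity
    have h2 : F ω = (ENNReal.ofReal (∏ n, ‖h n ω‖ ^ 2)) ^ (-a) := by
      rw [hFdef, h1, ← ENNReal.prod_rpow_of_ne_top fun _ _ => ENNReal.ofReal_ne_top]
      rfl
    show (ENNReal.ofReal ε) ^ (-a) ≤ F ω
    rw [h2]
    exact rpow_neg_anti ha0.le (ENNReal.ofReal_le_ofReal hω)
  have hmarkov := mul_meas_ge_le_lintegral₀ (μ := μ) hFm.aemeasurable ((ENNReal.ofReal ε) ^ (-a))
  have hxa0 : (ENNReal.ofReal ε) ^ a ≠ 0 :=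
    (ENNReal.rpow_pos (ENNReal.ofReal_pos.mpr hε) ENNReal.ofReal_ne_top).ne'
  have hxat : (ENNReal.ofReal ε) ^ a ≠ ⊤ :=
    ENNReal.rpow_ne_top_of_nonneg ha0.le ENNReal.ofReal_ne_top
  have hone : (ENNReal.ofReal ε) ^ a * (ENNReal.ofReal ε) ^ (-a) = 1 := by
    rw [ENNReal.rpow_neg, ENNReal.mul_inv_cancel hxa0 hxat]
  calc μ {ω | ∏ n, ‖h n ω‖ ^ 2 ≤ ε}
      ≤ μ {ω | (ENNReal.ofReal ε) ^ (-a) ≤ F ω} := measure_mono hsub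
    _ = (ENNReal.ofReal ε) ^ a * ((ENNReal.ofReal ε) ^ (-a)
          * μ {ω | (ENNReal.ofReal ε) ^ (-a) ≤ F ω}) := by
        rw [← mul_assoc, hone, one_mul]
    _ ≤ (ENNReal.ofReal ε) ^ a * ∫⁻ ω, F ω ∂μ := by gcongr
    _ = Ca ^ N * (ENNReal.ofReal ε) ^ a := by rw [hFint, mul_comm]

lemma indep_lower {N : ℕ} (hN : 1 ≤ N) (h : Fin N → Ω → ℂ) (hmeas : ∀ n, Measurable (h n))
    (hindep : iIndepFun h μ)
    (hdist : ∀ n, μ.map (h n) = stdComplexGaussian)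
    {ε : ℝ} (hε0 : 0 < ε) (hε1 : ε ≤ 1) :
    ENNReal.ofReal (Real.exp (-1) ^ N * ε) ≤ μ {ω | ∏ n, ‖h n ω‖ ^ 2 ≤ ε} := by
  classical
  have hi0 : 0 < N := hN
  set i0 : Fin N := ⟨0, hi0⟩ with hi0def
  set t : Fin N → ℝ := fun n => if n = i0 then ε else 1 with ht
  set S : Fin N → Set ℂ := fun n => {z | ‖z‖ ^ 2 ≤ t n} with hS
  have hSm : ∀ n, MeasurableSet (S n) := fun n =>
    measurableSet_le measurable_normsq measurable_const
  have ht0 : ∀ n, 0 < t n := by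
    intro n; rw [ht]; dsimp only; split <;> norm_num; exact hε0
  have ht1 : ∀ n, t n ≤ 1 := by
    intro n; rw [ht]; dsimp only; split <;> norm_num; exact hε1
  have hsub : (⋂ n, h n ⁻¹' S n) ⊆ {ω | ∏ n, ‖h n ω‖ ^ 2 ≤ ε} := by
    intro ω hω
    rw [Set.mem_iInter] at hω
    have hbn : ∀ n, ‖h n ω‖ ^ 2 ≤ t n := fun n => hω n
    show ∏ n, ‖h n ω‖ ^ 2 ≤ ε
    calc ∏ n, ‖h n ω‖ ^ 2
        = ‖h i0 ω‖ ^ 2 * ∏ n ∈ Finset.univ.erase i0, ‖h n ω‖ ^ 2 :=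
          (Finset.mul_prod_erase Finset.univ _ (Finset.mem_univ i0)).symm
      _ ≤ ε * 1 := by
          apply mul_le_mul
          · have := hbn i0
            simpa [ht] using this
          · apply Finset.prod_le_one
            · intro n _; positivity
            · intro n hn
              have := hbn n
              simpa [ht, (Finset.mem_erase.mp hn).1] using this
          · exact Finset.prod_nonneg fun n _ => by positivity
          · exact hε0.le
      _ = ε := mul_one ε
  have hInter : μ (⋂ n, h n ⁻¹' S n) = ∏ n, μ (h n ⁻¹' S n) := by
    have := hindep.measure_inter_preimage_eq_mul Finset.univ (sets := S)
      (fun i _ => hSm i)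
    simpa using this
  have hfac : ∀ n, ENNReal.ofReal (Real.exp (-1) * t n) ≤ μ (h n ⁻¹' S n) := by
    intro n
    have hmap : μ (h n ⁻¹' S n) = stdComplexGaussian (S n) := by
      rw [← hdist n, Measure.map_apply (hmeas n) (hSm n)]
    rw [hmap]
    exact nu_lower (t n) (ht0 n) (ht1 n)
  calc ENNReal.ofReal (Real.exp (-1) ^ N * ε)
      = ∏ n, ENNReal.ofReal (Real.exp (-1) * t n) := by
        rw [← ENNReal.ofReal_prod_of_nonneg fun n _ =>
          mul_nonneg (Real.exp_pos (-1)).le (ht0 n).le]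
        congr 1
        rw [Finset.prod_mul_distrib, Finset.prod_const, Finset.card_univ, Fintype.card_fin]
        congr 1
        symm
        calc ∏ n, t n = t i0 * ∏ n ∈ Finset.univ.erase i0, t n :=
              (Finset.mul_prod_erase Finset.univ _ (Finset.mem_univ i0)).symm
          _ = ε := by
              have hti0 : t i0 = ε := by simp [ht]
              have htn : ∀ n ∈ Finset.univ.erase i0, t n = 1 := fun n hn => by
                simp [ht, (Finset.mem_erase.mp hn).1]
              rw [hti0, Finset.prod_eq_one htn, mul_one]
    _ ≤ ∏ n, μ (h n ⁻¹' S n) := Finset.prod_le_prod' fun n _ => hfac n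
    _ = μ (⋂ n, h n ⁻¹' S n) := hInter.symm
    _ ≤ μ {ω | ∏ n, ‖h n ω‖ ^ 2 ≤ ε} := measure_mono hsub

end Main
set_option maxHeartbeats 1000000 in
/-- For `h_0, …, h_{N-1}` i.i.d. standard complex Gaussians and `0 ≤ r < 1`,
`P(∏ |h_n|² ≤ SNR^{-(1-r)}) ≐ SNR^{-(1-r)}` as `SNR → ∞`, i.e.
`log P(∏ |h_n|² ≤ SNR^{-(1-r)}) / log SNR → -(1-r)`. -/
theorem product_gaussian_tail_exponent
    {Ω : Type*} [MeasurableSpace Ω] (μ : Measure Ω) [IsProbabilityMeasure μ]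
    (N : ℕ) (hN : 1 ≤ N) (h : Fin N → Ω → ℂ)
    (hmeas : ∀ n, Measurable (h n))
    (hindep : iIndepFun h μ)
    (hdist : ∀ n, μ.map (h n) = stdComplexGaussian)
    (r : ℝ) (hr0 : 0 ≤ r) (hr1 : r < 1) :
    Tendsto
      (fun s : ℝ =>
        Real.log ((μ {ω | ∏ n, ‖h n ω‖ ^ 2 ≤ s ^ (-(1 - r))}).toReal) / Real.log s)
      atTop (nhds (-(1 - r))) := by
  have hc0 : 0 < 1 - r := by linarith
  set c := 1 - r with hc
  rw [Metric.tendsto_nhds]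
  intro δ hδ
  -- choice of the moment exponent a
  set a : ℝ := max (1 / 2) (1 - δ / (2 * c)) with ha
  have ha0 : 0 < a := lt_of_lt_of_le (by norm_num) (le_max_left _ _)
  have ha1 : a < 1 := by
    apply max_lt (by norm_num)
    have : 0 < δ / (2 * c) := by positivity
    linarith
  have hgap : (1 - a) * c ≤ δ / 2 := by
    have h1 : 1 - δ / (2 * c) ≤ a := le_max_right _ _
    have h2 : 1 - a ≤ δ / (2 * c) := by linarith
    calc (1 - a) * c ≤ δ / (2 * c) * c := mul_le_mul_of_nonneg_right h2 hc0.le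
      _ = δ / 2 := by field_simp
  set Ca := ∫⁻ z, (ENNReal.ofReal (‖z‖ ^ 2)) ^ (-a) ∂stdComplexGaussian with hCadef
  have hCane : Ca ^ N ≠ ⊤ := ENNReal.pow_ne_top (moment_ne_top ha0 ha1)
  set K : ℝ := (Ca ^ N).toReal with hKdef
  set β : ℝ := Real.exp (-1) ^ N with hβdef
  have hβ0 : 0 < β := by positivity
  have hev : ∀ᶠ s : ℝ in atTop,
      Real.exp (max (2 * N / δ) (2 * (|Real.log K| + 1) / δ) + 1) ≤ s :=
    eventually_ge_atTop _
  filter_upwards [hev, eventually_gt_atTop (1 : ℝ)] with s hs hs1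
  set M := max (2 * N / δ) (2 * (|Real.log K| + 1) / δ) with hM
  have hM1 : 2 * N / δ ≤ M := le_max_left _ _
  have hM2 : 2 * (|Real.log K| + 1) / δ ≤ M := le_max_right _ _
  have hs0 : (0 : ℝ) < s := by linarith
  have hD : M + 1 ≤ Real.log s := (Real.le_log_iff_exp_le hs0).mpr hs
  have hM0 : (0 : ℝ) ≤ M := le_trans (by positivity) hM2
  have hD0 : 0 < Real.log s := by linarith
  set ε := s ^ (-c) with hεdef
  have hε0 : 0 < ε := Real.rpow_pos_of_pos hs0 _
  have hε1 : ε ≤ 1 := Real.rpow_le_one_of_one_le_of_nonpos hs1.le (by linarith)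
  have hlogε : Real.log ε = -c * Real.log s := Real.log_rpow hs0 _
  set P := (μ {ω | ∏ n, ‖h n ω‖ ^ 2 ≤ ε}).toReal with hPdef
  have hlow : β * ε ≤ P := by
    rw [hPdef, ← ENNReal.ofReal_le_iff_le_toReal (measure_ne_top μ _)]
    exact indep_lower hN h hmeas hindep hdist hε0 hε1
  have hPpos : 0 < P := lt_of_lt_of_le (by positivity) hlow
  have hup : P ≤ K * ε ^ a := by
    have h1 := markov_upper h hmeas hindep hdist ha0 ha1 hε0
    have h2 : (μ {ω | ∏ n, ‖h n ω‖ ^ 2 ≤ ε}).toReal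
        ≤ (Ca ^ N * (ENNReal.ofReal ε) ^ a).toReal :=
      ENNReal.toReal_mono
        (ENNReal.mul_ne_top hCane
          (ENNReal.rpow_ne_top_of_nonneg ha0.le ENNReal.ofReal_ne_top)) h1
    rwa [ENNReal.toReal_mul, ← ENNReal.toReal_rpow, ENNReal.toReal_ofReal hε0.le] at h2
  have hK0 : 0 < K := by
    by_contra hcon
    push_neg at hcon
    nlinarith [Real.rpow_pos_of_pos hε0 a]
  have hlogP_low : -(N : ℝ) - c * Real.log s ≤ Real.log P := by
    calc -(N : ℝ) - c * Real.log s = Real.log β + Real.log ε := by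
          rw [hlogε, hβdef, Real.log_pow, Real.log_exp]; ring
      _ = Real.log (β * ε) := (Real.log_mul hβ0.ne' hε0.ne').symm
      _ ≤ Real.log P := Real.log_le_log (by positivity) hlow
  have hlogP_up : Real.log P ≤ Real.log K - a * c * Real.log s := by
    calc Real.log P ≤ Real.log (K * ε ^ a) := Real.log_le_log hPpos hup
      _ = Real.log K + a * Real.log ε := by
          rw [Real.log_mul hK0.ne' (by positivity), Real.log_rpow hε0]
      _ = Real.log K - a * c * Real.log s := by rw [hlogε]; ring
  have hNd : (N : ℝ) < δ * Real.log s := by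
    have t1 : δ * (2 * N / δ) ≤ δ * M := mul_le_mul_of_nonneg_left hM1 hδ.le
    have t2 : δ * (M + 1) ≤ δ * Real.log s := mul_le_mul_of_nonneg_left hD hδ.le
    have e1 : δ * (2 * N / δ) = 2 * N := by field_simp
    have hN0 : (0 : ℝ) ≤ N := Nat.cast_nonneg N
    nlinarith
  have hKd : Real.log K < δ / 2 * Real.log s := by
    have t1 : δ / 2 * (2 * (|Real.log K| + 1) / δ) ≤ δ / 2 * M :=
      mul_le_mul_of_nonneg_left hM2 (by positivity)
    have t2 : δ / 2 * (M + 1) ≤ δ / 2 * Real.log s :=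
      mul_le_mul_of_nonneg_left hD (by positivity)
    have e2 : δ / 2 * (2 * (|Real.log K| + 1) / δ) = |Real.log K| + 1 := by
      field_simp
    have := le_abs_self (Real.log K)
    nlinarith
  rw [Real.dist_eq, sub_neg_eq_add, abs_lt]
  constructor
  · have h1 : -(N : ℝ) / Real.log s ≤ Real.log P / Real.log s + c := by
      rw [div_add' _ _ _ hD0.ne']
      exact (div_le_div_iff_of_pos_right hD0).mpr (by linarith)
    have h2 : -δ < -(N : ℝ) / Real.log s := by
      rw [neg_div, neg_lt_neg_iff, div_lt_iff₀ hD0]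
      linarith [hNd]
    linarith
  · have h1 : Real.log P / Real.log s + c
        ≤ Real.log K / Real.log s + (1 - a) * c := by
      rw [div_add' _ _ _ hD0.ne', div_add' _ _ _ hD0.ne']
      exact (div_le_div_iff_of_pos_right hD0).mpr (by nlinarith)
    have h2 : Real.log K / Real.log s < δ / 2 := by
      rw [div_lt_iff₀ hD0]
      linarith [hKd]
    linarith
end

section
/- If X_1,...,X_N are independent Exp(1) random variables, then the product Y = prod_{n=1}^N X_n satisfies lim_{ε->0+} log P(Y <= ε)/log ε = 1; equivalently, the diversity order of a product of N independent Rayleigh-fading scalar channels is 1, independent of N. -/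
open MeasureTheory ProbabilityTheory Filter Set
open scoped ENNReal

namespace DivOrderAux


lemma inv_log_tendsto : Tendsto (fun ε : ℝ => (Real.log ε)⁻¹) (nhdsWithin 0 (Set.Ioi 0)) (nhds 0) := by
  have h : Tendsto (fun ε : ℝ => -Real.log ε) (nhdsWithin 0 (Set.Ioi 0)) atTop :=
    tendsto_neg_atBot_atTop.comp Real.tendsto_log_nhdsGT_zero
  have h2 := (tendsto_inv_atTop_zero.comp h).neg
  simpa [inv_neg] using h2

lemma expMeasure_Iic (x : ℝ) :
    expMeasure 1 (Set.Iic x) = ENNReal.ofReal (if 0 ≤ x then 1 - Real.exp (-x) else 0) := by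
  rw [show expMeasure 1 = MeasureTheory.volume.withDensity (exponentialPDF 1) from rfl,
    withDensity_apply _ measurableSet_Iic]
  simpa using lintegral_exponentialPDF_eq_antiDeriv one_pos x

lemma lintegral_finset_prod {Ω : Type*} [MeasurableSpace Ω] (μ : Measure Ω)
    [IsProbabilityMeasure μ] {ι : Type*} {h : ι → Ω → ℝ≥0∞}
    (hm : ∀ i, Measurable (h i))
    (hind : iIndepFun h μ) (s : Finset ι) :
    ∫⁻ ω, ∏ i ∈ s, h i ω ∂μ = ∏ i ∈ s, ∫⁻ ω, h i ω ∂μ := by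
  classical
  induction s using Finset.induction_on with
  | empty => simp
  | insert _ _ hns ih =>
    rename_i a s
    have hg : Measurable (∏ i ∈ s, h i) := by
      have : (∏ i ∈ s, h i) = fun ω => ∏ i ∈ s, h i ω := by
        funext ω; simp
      rw [this]
      exact Finset.measurable_prod _ fun i _ => hm i
    have hIF : IndepFun (h a) (∏ j ∈ s, h j) μ :=
      (hind.indepFun_finset_prod_of_notMem hm hns).symm
    have key := lintegral_mul_eq_lintegral_mul_lintegral_of_indepFun (hm a) hg hIF
    simp_rw [Finset.prod_insert hns]
    calc ∫⁻ ω, h a ω * ∏ i ∈ s, h i ω ∂μ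
        = ∫⁻ ω, (h a * ∏ i ∈ s, h i) ω ∂μ := by
          apply lintegral_congr; intro ω; simp
      _ = (∫⁻ ω, h a ω ∂μ) * ∫⁻ ω, (∏ i ∈ s, h i) ω ∂μ := key
      _ = (∫⁻ ω, h a ω ∂μ) * ∏ i ∈ s, ∫⁻ ω, h i ω ∂μ := by
          rw [← ih]; congr 1; apply lintegral_congr; intro ω; simp

lemma lintegral_rpow_expMeasure {s : ℝ} (hs0 : 0 < s) (hs1 : s < 1) :
    ∫⁻ x, ENNReal.ofReal (x ^ (-s)) ∂(expMeasure 1) = ENNReal.ofReal (Real.Gamma (1 - s)) := by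
  have hmg : Measurable fun x : ℝ => ENNReal.ofReal (x ^ (-s)) := by fun_prop
  have hmp : Measurable (exponentialPDF 1) :=
    (measurable_exponentialPDFReal 1).ennreal_ofReal
  rw [show expMeasure 1 = MeasureTheory.volume.withDensity (exponentialPDF 1) from rfl,
    lintegral_withDensity_eq_lintegral_mul _ hmp hmg]
  have hsplit := lintegral_add_compl (μ := MeasureTheory.volume)
    (fun x : ℝ => (exponentialPDF 1 * fun x => ENNReal.ofReal (x ^ (-s))) x)
    (measurableSet_Ioi (a := (0:ℝ)))
  rw [← hsplit]
  have hzero : ∫⁻ x in (Set.Ioi (0:ℝ))ᶜ,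
      (exponentialPDF 1 * fun x => ENNReal.ofReal (x ^ (-s))) x = 0 := by
    rw [compl_Ioi]
    rw [setLIntegral_congr_fun measurableSet_Iic ?_, lintegral_zero]
    intro x hx
    simp only [Pi.mul_apply]
    rcases lt_or_eq_of_le (show x ≤ (0:ℝ) from hx) with hlt | heq
    · rw [exponentialPDF_of_neg hlt, zero_mul]
    · rw [heq, Real.zero_rpow (by linarith : -s ≠ 0)]
      simp
  rw [hzero, add_zero]
  have hconv : IntegrableOn (fun x : ℝ => Real.exp (-x) * x ^ ((1-s) - 1)) (Set.Ioi 0) :=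
    Real.GammaIntegral_convergent (by linarith)
  have h1s : (1 - s) - 1 = -s := by ring
  rw [h1s] at hconv
  rw [Real.Gamma_eq_integral (by linarith : (0:ℝ) < 1 - s), h1s]
  rw [MeasureTheory.ofReal_integral_eq_lintegral_ofReal hconv ?_]
  · apply setLIntegral_congr_fun measurableSet_Ioi ?_
    intro x hx
    have hx0 : (0:ℝ) < x := hx
    simp only [Pi.mul_apply]
    rw [exponentialPDF_of_nonneg hx0.le, ← ENNReal.ofReal_mul (by positivity)]
    congr 1
    simp [mul_comm]
  · filter_upwards [ae_restrict_mem measurableSet_Ioi] with x hx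
    have hx0 : (0:ℝ) < x := hx
    positivity


variable {Ω : Type*} [MeasurableSpace Ω] {μ : Measure Ω} [IsProbabilityMeasure μ]
  {N : ℕ} {X : Fin N → Ω → ℝ}

lemma ae_pos (hmeas : ∀ n, Measurable (X n)) (hdist : ∀ n, μ.map (X n) = expMeasure 1) :
    ∀ᵐ ω ∂μ, ∀ n, 0 < X n ω := by
  rw [ae_all_iff]
  intro n
  rw [ae_iff]
  have hset : {ω | ¬ 0 < X n ω} = X n ⁻¹' (Set.Iic 0) := by
    ext ω; simp [not_lt]
  rw [hset, ← Measure.map_apply (hmeas n) measurableSet_Iic, hdist n, expMeasure_Iic]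
  simp

lemma upper_bound (hmeas : ∀ n, Measurable (X n))
    (hindep : iIndepFun X μ)
    (hdist : ∀ n, μ.map (X n) = expMeasure 1)
    {s : ℝ} (hs0 : 0 < s) (hs1 : s < 1) {ε : ℝ} (hε : 0 < ε) :
    μ {ω | ∏ n, X n ω ≤ ε}
      ≤ ENNReal.ofReal (ε ^ s) * ENNReal.ofReal (Real.Gamma (1 - s)) ^ N := by
  classical
  set g : ℝ → ℝ≥0∞ := fun x => ENNReal.ofReal (x ^ (-s)) with hg
  have hgm : Measurable g := by fun_prop
  have hcomp : iIndepFun (fun n => g ∘ X n) μ :=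
    hindep.comp _ (fun _ => hgm)
  have hLint : ∫⁻ ω, ∏ n, g (X n ω) ∂μ = ENNReal.ofReal (Real.Gamma (1 - s)) ^ N := by
    have hlp := lintegral_finset_prod μ (fun n => hgm.comp (hmeas n)) hcomp Finset.univ
    simp only [Function.comp_apply] at hlp
    rw [hlp]
    have heach : ∀ n, ∫⁻ ω, g (X n ω) ∂μ = ENNReal.ofReal (Real.Gamma (1 - s)) := by
      intro n
      rw [← lintegral_map hgm (hmeas n), hdist n]
      exact lintegral_rpow_expMeasure hs0 hs1
    simp only [heach]
    simp [Finset.prod_const]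
  -- Markov
  set E : Set Ω := {ω | ∏ n, X n ω ≤ ε} with hE
  set G : Set Ω := {ω | ∀ n, 0 < X n ω} with hG
  have hGc : μ Gᶜ = 0 := by
    have := ae_pos hmeas hdist
    rwa [ae_iff] at this
  have hEG : μ (E ∩ G) = μ E := measure_inter_conull hGc
  have hsub : E ∩ G ⊆ {ω | ENNReal.ofReal (ε ^ (-s)) ≤ ∏ n, g (X n ω)} := by
    rintro ω ⟨hωE, hωG⟩
    have hYpos : 0 < ∏ n, X n ω := Finset.prod_pos fun n _ => hωG n
    have h1 : ε ^ (-s) ≤ (∏ n, X n ω) ^ (-s) :=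
      Real.rpow_le_rpow_of_nonpos hYpos hωE (by linarith)
    have h2 : (∏ n, X n ω) ^ (-s) = ∏ n, (X n ω) ^ (-s) :=
      (Real.finset_prod_rpow Finset.univ _ (fun n _ => (hωG n).le) _).symm
    have h3 : (∏ n, g (X n ω)) = ENNReal.ofReal (∏ n, (X n ω) ^ (-s)) :=
      (ENNReal.ofReal_prod_of_nonneg fun n _ =>
        Real.rpow_nonneg (hωG n).le _).symm
    rw [Set.mem_setOf_eq, h3]
    exact ENNReal.ofReal_le_ofReal (h1.trans_eq h2)
  have hmf : AEMeasurable (fun ω => ∏ n, g (X n ω)) μ :=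
    (Finset.measurable_prod Finset.univ fun n _ => hgm.comp (hmeas n)).aemeasurable
  have hmarkov : ENNReal.ofReal (ε ^ (-s)) * μ E
      ≤ ENNReal.ofReal (Real.Gamma (1 - s)) ^ N := by
    calc ENNReal.ofReal (ε ^ (-s)) * μ E
        = ENNReal.ofReal (ε ^ (-s)) * μ (E ∩ G) := by rw [hEG]
      _ ≤ ENNReal.ofReal (ε ^ (-s)) * μ {ω | ENNReal.ofReal (ε ^ (-s)) ≤ ∏ n, g (X n ω)} :=
          mul_le_mul_right (measure_mono hsub) _
      _ ≤ ∫⁻ ω, ∏ n, g (X n ω) ∂μ := mul_meas_ge_le_lintegral₀ hmf _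
      _ = _ := hLint
  have ha : ENNReal.ofReal (ε ^ (-s)) = (ENNReal.ofReal (ε ^ s))⁻¹ := by
    rw [← ENNReal.ofReal_inv_of_pos (Real.rpow_pos_of_pos hε s), ← Real.rpow_neg hε.le]
  have ha0 : ENNReal.ofReal (ε ^ (-s)) ≠ 0 := by
    exact (ENNReal.ofReal_pos.mpr (Real.rpow_pos_of_pos hε _)).ne'
  rw [ha] at hmarkov
  calc μ E = ENNReal.ofReal (ε ^ s) * ((ENNReal.ofReal (ε ^ s))⁻¹ * μ E) := by
        rw [← mul_assoc, ENNReal.mul_inv_cancel ((ENNReal.ofReal_pos.mpr (Real.rpow_pos_of_pos hε _)).ne') ENNReal.ofReal_ne_top,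
          one_mul]
    _ ≤ ENNReal.ofReal (ε ^ s) * (ENNReal.ofReal (Real.Gamma (1 - s)) ^ N) :=
        mul_le_mul_right hmarkov _

lemma lower_bound (hN : 1 ≤ N) (hmeas : ∀ n, Measurable (X n))
    (hindep : iIndepFun X μ)
    (hdist : ∀ n, μ.map (X n) = expMeasure 1)
    {ε : ℝ} (hε0 : 0 < ε) (hε1 : ε ≤ 1) :
    ENNReal.ofReal (1 - Real.exp (-ε)) * ENNReal.ofReal (1 - Real.exp (-1)) ^ (N - 1)
      ≤ μ {ω | ∏ n, X n ω ≤ ε} := by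
  classical
  set i0 : Fin N := ⟨0, hN⟩ with hi0
  set b : Fin N → ℝ := fun i => if i = i0 then ε else 1 with hb
  have hbnn : ∀ i, 0 ≤ b i := by
    intro i; by_cases h : i = i0 <;> simp [hb, h, hε0.le]
  have hmeasI : μ (⋂ i, X i ⁻¹' Set.Iic (b i)) = ∏ i, μ (X i ⁻¹' Set.Iic (b i)) :=
    hindep.meas_iInter fun i => ⟨Set.Iic (b i), measurableSet_Iic, rfl⟩
  have heach : ∀ i, μ (X i ⁻¹' Set.Iic (b i)) = ENNReal.ofReal (1 - Real.exp (-(b i))) := by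
    intro i
    rw [← Measure.map_apply (hmeas i) measurableSet_Iic, hdist i, expMeasure_Iic,
      if_pos (hbnn i)]
  have hprod : ∏ i, μ (X i ⁻¹' Set.Iic (b i))
      = ENNReal.ofReal (1 - Real.exp (-ε)) * ENNReal.ofReal (1 - Real.exp (-1)) ^ (N - 1) := by
    calc ∏ i, μ (X i ⁻¹' Set.Iic (b i))
        = ∏ i, ENNReal.ofReal (1 - Real.exp (-(b i))) :=
          Finset.prod_congr rfl fun i _ => heach i
      _ = ENNReal.ofReal (1 - Real.exp (-(b i0))) *
            ∏ i ∈ Finset.univ.erase i0, ENNReal.ofReal (1 - Real.exp (-(b i))) :=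
          (Finset.mul_prod_erase Finset.univ _ (Finset.mem_univ i0)).symm
      _ = ENNReal.ofReal (1 - Real.exp (-ε)) * ENNReal.ofReal (1 - Real.exp (-1)) ^ (N - 1) := by
          rw [Finset.prod_congr rfl (fun i hi =>
              show ENNReal.ofReal (1 - Real.exp (-(b i))) = ENNReal.ofReal (1 - Real.exp (-1)) by
                simp [hb, Finset.ne_of_mem_erase hi]),
            Finset.prod_const, Finset.card_erase_of_mem (Finset.mem_univ i0),
            Finset.card_univ, Fintype.card_fin]
          simp [hb]
  -- inclusion up to null set
  set G : Set Ω := {ω | ∀ n, 0 < X n ω} with hG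
  have hGc : μ Gᶜ = 0 := by
    have := ae_pos hmeas hdist
    rwa [ae_iff] at this
  have hsub : (⋂ i, X i ⁻¹' Set.Iic (b i)) ∩ G ⊆ {ω | ∏ n, X n ω ≤ ε} := by
    rintro ω ⟨hω, hωG⟩
    simp only [Set.mem_iInter, Set.mem_preimage, Set.mem_Iic] at hω
    have h1 : ∏ n, X n ω ≤ ∏ n, b n :=
      Finset.prod_le_prod (fun n _ => (hωG n).le) (fun n _ => hω n)
    have h2 : ∏ n, b n = ε := by
      simp only [hb]
      rw [Finset.prod_ite_eq' Finset.univ i0 (fun _ => ε)]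
      simp
    exact h1.trans_eq h2
  calc ENNReal.ofReal (1 - Real.exp (-ε)) * ENNReal.ofReal (1 - Real.exp (-1)) ^ (N - 1)
      = μ (⋂ i, X i ⁻¹' Set.Iic (b i)) := by rw [hmeasI, hprod]
    _ = μ ((⋂ i, X i ⁻¹' Set.Iic (b i)) ∩ G) := (measure_inter_conull hGc).symm
    _ ≤ μ {ω | ∏ n, X n ω ≤ ε} := measure_mono hsub

end DivOrderAux


/-- If `X_1, …, X_N` are independent `Exp(1)` random variables, then the product
`Y = ∏ X_n` satisfies `lim_{ε → 0⁺} log P(Y ≤ ε)/log ε = 1`: the diversity order of a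
product of `N` independent Rayleigh-fading scalar channels is `1`, independent of `N`. -/
theorem product_exponential_diversity_order
    {Ω : Type*} [MeasurableSpace Ω] (μ : Measure Ω) [IsProbabilityMeasure μ]
    (N : ℕ) (hN : 1 ≤ N) (X : Fin N → Ω → ℝ)
    (hmeas : ∀ n, Measurable (X n))
    (hindep : iIndepFun X μ)
    (hdist : ∀ n, μ.map (X n) = expMeasure 1) :
    Tendsto
      (fun ε : ℝ => Real.log ((μ {ω | ∏ n, X n ω ≤ ε}).toReal) / Real.log ε)
      (nhdsWithin 0 (Set.Ioi 0)) (nhds 1) := by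
  classical
  open DivOrderAux in
  have hb1 : (0:ℝ) < 1 - Real.exp (-1) := by
    have h := Real.exp_lt_exp.mpr (show (-1:ℝ) < 0 by norm_num)
    rw [Real.exp_zero] at h
    linarith
  set c : ℝ := (1 - Real.exp (-1)) ^ (N - 1) with hcdef
  have hc0 : (0:ℝ) < c := pow_pos hb1 _
  -- Step A: real lower bound
  have hA : ∀ ε : ℝ, 0 < ε → ε < 1 →
      ε / 2 * c ≤ (μ {ω | ∏ n, X n ω ≤ ε}).toReal := by
    intro ε h0 h1
    have hlow := DivOrderAux.lower_bound hN hmeas hindep hdist h0 h1.le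
    have hfin : μ {ω | ∏ n, X n ω ≤ ε} ≠ ⊤ := measure_ne_top μ _
    have hexple : Real.exp (-ε) ≤ 1 := by
      have h := Real.exp_le_exp.mpr (show -ε ≤ 0 by linarith)
      rwa [Real.exp_zero] at h
    have h2 : ENNReal.ofReal ((1 - Real.exp (-ε)) * c)
        ≤ μ {ω | ∏ n, X n ω ≤ ε} := by
      rw [ENNReal.ofReal_mul (by linarith), hcdef, ENNReal.ofReal_pow hb1.le]
      exact hlow
    have h3 : (1 - Real.exp (-ε)) * c ≤ (μ {ω | ∏ n, X n ω ≤ ε}).toReal := by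
      have h4 := ENNReal.toReal_mono hfin h2
      rwa [ENNReal.toReal_ofReal (by nlinarith)] at h4
    have key : Real.exp (-ε) * (ε + 1) ≤ 1 := by
      calc Real.exp (-ε) * (ε + 1) ≤ Real.exp (-ε) * Real.exp ε :=
            mul_le_mul_of_nonneg_left (by simpa [add_comm] using Real.add_one_le_exp ε)
              (Real.exp_pos _).le
        _ = 1 := by rw [← Real.exp_add]; simp
    have hhalf : ε / 2 ≤ 1 - Real.exp (-ε) := by nlinarith [Real.exp_pos (-ε)]
    calc ε / 2 * c ≤ (1 - Real.exp (-ε)) * c := mul_le_mul_of_nonneg_right hhalf hc0.le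
      _ ≤ _ := h3
  -- Step B: real upper bound
  have hB : ∀ s : ℝ, 0 < s → s < 1 → ∀ ε : ℝ, 0 < ε →
      (μ {ω | ∏ n, X n ω ≤ ε}).toReal ≤ ε ^ s * Real.Gamma (1 - s) ^ N := by
    intro s hs0 hs1 ε h0
    have hup := DivOrderAux.upper_bound hmeas hindep hdist hs0 hs1 h0
    have hΓ : 0 < Real.Gamma (1 - s) := Real.Gamma_pos_of_pos (by linarith)
    have h5 := ENNReal.toReal_mono
      (ENNReal.mul_ne_top ENNReal.ofReal_ne_top
        (ENNReal.pow_ne_top ENNReal.ofReal_ne_top)) hup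
    rwa [ENNReal.toReal_mul, ENNReal.toReal_pow,
      ENNReal.toReal_ofReal (Real.rpow_pos_of_pos h0 s).le,
      ENNReal.toReal_ofReal hΓ.le] at h5
  rw [tendsto_order]
  constructor
  · -- lower: for a < 1, eventually a < f ε
    intro a ha
    set s : ℝ := max (1/2) ((a+1)/2) with hsdef
    have hs0 : (0:ℝ) < s := lt_max_iff.mpr (Or.inl (by norm_num))
    have hs1 : s < 1 := max_lt (by norm_num) (by linarith)
    have has : a < s := lt_max_iff.mpr (Or.inr (by linarith))
    have hΓ : 0 < Real.Gamma (1 - s) := Real.Gamma_pos_of_pos (by linarith)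
    have hG : Tendsto
        (fun ε : ℝ => s + (N * Real.log (Real.Gamma (1 - s))) * (Real.log ε)⁻¹)
        (nhdsWithin 0 (Set.Ioi 0)) (nhds s) := by
      have h6 := (DivOrderAux.inv_log_tendsto.const_mul
        ((N : ℝ) * Real.log (Real.Gamma (1 - s)))).const_add s
      simpa using h6
    have hev1 := hG.eventually (eventually_gt_nhds has)
    have hev2 : ∀ᶠ ε in nhdsWithin (0:ℝ) (Set.Ioi 0), ε < 1 :=
      eventually_nhdsWithin_of_eventually_nhds (eventually_lt_nhds one_pos)
    filter_upwards [hev1, hev2, self_mem_nhdsWithin] with ε h1 h2 h3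
    have h0 : (0:ℝ) < ε := h3
    have hL : Real.log ε < 0 := Real.log_neg h0 h2
    have hppos : 0 < (μ {ω | ∏ n, X n ω ≤ ε}).toReal :=
      lt_of_lt_of_le (by positivity) (hA ε h0 h2)
    have hup := hB s hs0 hs1 ε h0
    have hlog : Real.log ((μ {ω | ∏ n, X n ω ≤ ε}).toReal)
        ≤ s * Real.log ε + N * Real.log (Real.Gamma (1 - s)) := by
      calc Real.log ((μ {ω | ∏ n, X n ω ≤ ε}).toReal)
          ≤ Real.log (ε ^ s * Real.Gamma (1 - s) ^ N) := Real.log_le_log hppos hup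
        _ = s * Real.log ε + N * Real.log (Real.Gamma (1 - s)) := by
            rw [Real.log_mul (ne_of_gt (Real.rpow_pos_of_pos h0 s))
              (ne_of_gt (pow_pos hΓ N)), Real.log_rpow h0, Real.log_pow]
    have hdiv := (div_le_div_right_of_neg hL).mpr hlog
    have heq : (s * Real.log ε + N * Real.log (Real.Gamma (1 - s))) / Real.log ε
        = s + (N * Real.log (Real.Gamma (1 - s))) * (Real.log ε)⁻¹ := by
      rw [add_div, mul_div_assoc, div_self hL.ne, mul_one, div_eq_mul_inv]
    rw [heq] at hdiv
    exact h1.trans_le hdiv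
  · -- upper: for 1 < a, eventually f ε < a
    intro a ha
    have hH : Tendsto (fun ε : ℝ => 1 + Real.log (c / 2) * (Real.log ε)⁻¹)
        (nhdsWithin 0 (Set.Ioi 0)) (nhds 1) := by
      have h6 := (DivOrderAux.inv_log_tendsto.const_mul (Real.log (c / 2))).const_add 1
      simpa using h6
    have hev1 := hH.eventually (eventually_lt_nhds ha)
    have hev2 : ∀ᶠ ε in nhdsWithin (0:ℝ) (Set.Ioi 0), ε < 1 :=
      eventually_nhdsWithin_of_eventually_nhds (eventually_lt_nhds one_pos)
    filter_upwards [hev1, hev2, self_mem_nhdsWithin] with ε h1 h2 h3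
    have h0 : (0:ℝ) < ε := h3
    have hL : Real.log ε < 0 := Real.log_neg h0 h2
    have hlow := hA ε h0 h2
    have hppos : 0 < (μ {ω | ∏ n, X n ω ≤ ε}).toReal :=
      lt_of_lt_of_le (by positivity) hlow
    have hlog : Real.log ε + Real.log (c / 2)
        ≤ Real.log ((μ {ω | ∏ n, X n ω ≤ ε}).toReal) := by
      have h7 : Real.log (ε * (c / 2)) ≤ Real.log ((μ {ω | ∏ n, X n ω ≤ ε}).toReal) :=
        Real.log_le_log (by positivity) (by linarith [hlow])
      rwa [Real.log_mul h0.ne' (by positivity)] at h7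
    have hdiv := (div_le_div_right_of_neg hL).mpr hlog
    have heq : (Real.log ε + Real.log (c / 2)) / Real.log ε
        = 1 + Real.log (c / 2) * (Real.log ε)⁻¹ := by
      rw [add_div, div_self hL.ne, div_eq_mul_inv]
    rw [heq] at hdiv
    exact lt_of_le_of_lt hdiv h1
end

section
/- In the complete layered graph with stages of sizes M_0,...,M_N, after deleting one node from each stage, the maximum number of pairwise edge-disjoint source-to-destination paths in the remaining graph is min over n of (M_n - 1)(M_{n+1} - 1). -/
lemma crt_aux {a d : ℕ} (hd : 0 < d) (hda : d ≤ a) {i j : ℕ}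
    (h1 : i % a = j % a) (h2 : i / d = j / d) : i = j := by
  wlog h : i ≤ j generalizing i j
  · exact (this h1.symm h2.symm (by omega)).symm
  have hdvd : a ∣ j - i := (Nat.modEq_iff_dvd' h).mp h1
  have e1 := Nat.div_add_mod i d
  have e2 := Nat.div_add_mod j d
  rw [h2] at e1
  have m1 : i % d < d := Nat.mod_lt _ hd
  have m2 : j % d < d := Nat.mod_lt _ hd
  generalize d * (j / d) = t at e1 e2
  have hlt : j - i < d := by omega
  have := Nat.eq_zero_of_dvd_of_lt hdvd (lt_of_lt_of_le hlt hda)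
  omega

lemma key_family (k N : ℕ) (m : ℕ → ℕ) (hm : ∀ j, 1 ≤ m j)
    (hk : ∀ j, j ≤ N → k ≤ m j * m (j + 1)) :
    ∃ f : ℕ → ℕ → ℕ,
      (∀ i, i < k → ∀ j, j ≤ N → f i j < m j) ∧
      (∀ i₁ i₂, i₁ < k → i₂ < k → ∀ j, j < N →
        f i₁ j = f i₂ j → f i₁ (j + 1) = f i₂ (j + 1) → i₁ = i₂) := by
  refine ⟨fun i j => if j % 2 = 0 then i % m j else i / min (m (j - 1)) (m (j + 1)), ?_, ?_⟩
  · intro i hi j hjN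
    by_cases hj : j % 2 = 0
    · simp only [if_pos hj]
      exact Nat.mod_lt _ (hm j)
    · simp only [if_neg hj]
      have hj1 : 1 ≤ j := by omega
      have hd : 0 < min (m (j - 1)) (m (j + 1)) := lt_min (hm _) (hm _)
      rw [Nat.div_lt_iff_lt_mul hd]
      have h1 : k ≤ m (j - 1) * m j := by
        have := hk (j - 1) (by omega)
        rwa [show j - 1 + 1 = j by omega] at this
      have h2 : k ≤ m j * m (j + 1) := hk j hjN
      have hle : k ≤ m j * min (m (j - 1)) (m (j + 1)) := by
        rcases le_total (m (j - 1)) (m (j + 1)) with h | h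
        · rw [min_eq_left h, mul_comm]; exact h1
        · rw [min_eq_right h]; exact h2
      exact lt_of_lt_of_le hi hle
  · intro i₁ i₂ h1 h2 j hj hfj hfj1
    by_cases hp : j % 2 = 0
    · have hp1 : ¬ (j + 1) % 2 = 0 := by omega
      simp only [if_pos hp] at hfj
      simp only [if_neg hp1, Nat.add_sub_cancel] at hfj1
      have hd : 0 < min (m j) (m (j + 1 + 1)) := lt_min (hm _) (hm _)
      exact crt_aux hd (min_le_left _ _) hfj hfj1
    · have hp1 : (j + 1) % 2 = 0 := by omega
      simp only [if_neg hp] at hfj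
      simp only [if_pos hp1] at hfj1
      have hd : 0 < min (m (j - 1)) (m (j + 1)) := lt_min (hm _) (hm _)
      exact crt_aux hd (min_le_right _ _) hfj1 hfj



/-- A path in the complete layered graph whose stage `n` has `M n - 1` nodes
(one node deleted from each stage of the original graph with stage sizes `M n`). -/
abbrev ReducedPath (N : ℕ) (M : Fin (N + 1) → ℕ) : Type :=
  (n : Fin (N + 1)) → Fin (M n - 1)

/-- The edge of a reduced path used between stage `n` and stage `n+1`. -/
def reducedPathEdge {N : ℕ} {M : Fin (N + 1) → ℕ} (p : ReducedPath N M) (n : Fin N) :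
    Fin (M n.castSucc - 1) × Fin (M n.succ - 1) :=
  (p n.castSucc, p n.succ)

/-- Edge-disjointness of two reduced paths. -/
def ReducedEdgeDisjoint {N : ℕ} {M : Fin (N + 1) → ℕ} (p q : ReducedPath N M) : Prop :=
  ∀ n : Fin N, reducedPathEdge p n ≠ reducedPathEdge q n

/-- After deleting one node from each stage of the complete layered graph with stage sizes
`M_0, …, M_N` (all `M_n ≥ 2`), the remaining graph is a complete layered graph with stage
sizes `M_n - 1`, and the maximum number of pairwise edge-disjoint source-to-destination
paths in it is `min_n (M_n - 1)(M_{n+1} - 1)`. -/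
theorem max_edge_disjoint_paths_after_deletion (N : ℕ) (hN : 1 ≤ N)
    (M : Fin (N + 1) → ℕ) (hM : ∀ n, 2 ≤ M n) :
    IsGreatest
      {k : ℕ | ∃ S : Finset (ReducedPath N M),
        (S : Set (ReducedPath N M)).Pairwise ReducedEdgeDisjoint ∧ S.card = k}
      (sInf (Set.range fun n : Fin N => (M n.castSucc - 1) * (M n.succ - 1))) := by
  set K := sInf (Set.range fun n : Fin N => (M n.castSucc - 1) * (M n.succ - 1)) with hKdef
  have hKle : ∀ n : Fin N, K ≤ (M n.castSucc - 1) * (M n.succ - 1) :=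
    fun n => Nat.sInf_le ⟨n, rfl⟩
  constructor
  · -- membership: construct K pairwise edge-disjoint paths
    set mm : ℕ → ℕ := fun j => if h : j < N + 1 then M ⟨j, h⟩ - 1 else K + 1 with hmm
    have hm : ∀ j, 1 ≤ mm j := by
      intro j
      by_cases h : j < N + 1
      · simp only [hmm, dif_pos h]
        have := hM ⟨j, h⟩; omega
      · simp only [hmm, dif_neg h]; omega
    have hmmval : ∀ n : Fin (N + 1), mm n.val = M n - 1 := by
      intro n
      simp only [hmm, dif_pos n.isLt, Fin.eta]
    have hk : ∀ j, j ≤ N → K ≤ mm j * mm (j + 1) := by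
      intro j hj
      rcases lt_or_eq_of_le hj with h | h
      · have := hKle ⟨j, h⟩
        have e1 : mm j = M (Fin.castSucc ⟨j, h⟩) - 1 := by
          simp only [hmm, dif_pos (show j < N + 1 by omega)]
          rfl
        have e2 : mm (j + 1) = M (Fin.succ ⟨j, h⟩) - 1 := by
          simp only [hmm, dif_pos (show j + 1 < N + 1 by omega)]
          rfl
        rw [e1, e2]; exact this
      · subst h
        have h1 : mm (j + 1) = K + 1 := by
          simp only [hmm, dif_neg (show ¬ (j + 1 < j + 1) by omega)]
        rw [h1]
        calc K ≤ 1 * (K + 1) := by omega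
          _ ≤ mm j * (K + 1) := Nat.mul_le_mul_right _ (hm j)
    obtain ⟨f, hrange, hinj⟩ := key_family K N mm hm hk
    have hrange' : ∀ (i : Fin K) (n : Fin (N + 1)), f i.val n.val < M n - 1 := by
      intro i n
      have := hrange i.val i.isLt n.val (by omega)
      rwa [hmmval n] at this
    set pfun : Fin K → ReducedPath N M := fun i n => ⟨f i.val n.val, hrange' i n⟩ with hpfun
    have hEdgeInj : ∀ (i j : Fin K) (n : Fin N),
        reducedPathEdge (pfun i) n = reducedPathEdge (pfun j) n → i = j := by
      intro i j n h
      have h1 : pfun i n.castSucc = pfun j n.castSucc := congrArg Prod.fst h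
      have h2 : pfun i n.succ = pfun j n.succ := congrArg Prod.snd h
      have e1 : f i.val n.val = f j.val n.val := congrArg Fin.val h1
      have e2 : f i.val (n.val + 1) = f j.val (n.val + 1) := congrArg Fin.val h2
      exact Fin.ext (hinj i.val j.val i.isLt j.isLt n.val n.isLt e1 e2)
    have hpinj : Function.Injective pfun := by
      intro i j h
      exact hEdgeInj i j ⟨0, hN⟩ (by rw [h])
    refine ⟨Finset.univ.image pfun, ?_, ?_⟩
    · intro p hp q hq hne n hEq
      rw [Finset.mem_coe, Finset.mem_image] at hp hq
      obtain ⟨i, -, rfl⟩ := hp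
      obtain ⟨j, -, rfl⟩ := hq
      exact hne (congrArg pfun (hEdgeInj i j n hEq))
    · rw [Finset.card_image_of_injective _ hpinj, Finset.card_univ, Fintype.card_fin]
  · -- upper bound
    rintro k' ⟨S, hpair, rfl⟩
    have : Nonempty (Fin N) := ⟨⟨0, hN⟩⟩
    apply le_csInf (Set.range_nonempty _)
    rintro b ⟨n, rfl⟩
    have hcard : S.card ≤ (Finset.univ :
        Finset (Fin (M n.castSucc - 1) × Fin (M n.succ - 1))).card := by
      apply Finset.card_le_card_of_injOn (fun p => reducedPathEdge p n)
        (fun _ _ => Finset.mem_univ _)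
      intro p hp q hq heq
      by_contra hne
      exact hpair hp hq hne n heq
    simpa using hcard
end

section
/- Let H^{ud} be a block lower-triangular matrix with identical diagonal blocks H_1 and let H^d be the block-diagonal matrix with the same diagonal blocks H_1. Then for any positive semidefinite input covariance, det(I + SNR * H^{ud} (H^{ud})^†) >= det(I + SNR * H^d (H^d)^†); hence the mutual information (and thus outage exponent) of the channel H^{ud} is at least that of H^d. -/
open Matrix

/-- The block lower-triangular channel matrix `H^{ud}` of an (undirected) multi-hop relay
channel over `T` time slots: block `(i, j)` equals `H (i - j)` for `j ≤ i` and `0`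
otherwise; in particular all diagonal blocks equal `H 0 = H₁`. -/
def blockLowerTri (T m p : ℕ) (H : ℕ → Matrix (Fin m) (Fin p) ℂ) :
    Matrix (Fin T × Fin m) (Fin T × Fin p) ℂ :=
  fun x y => if y.1.1 ≤ x.1.1 then H (x.1.1 - y.1.1) x.2 y.2 else 0

/-- The block-diagonal matrix `H^d` with the same diagonal blocks `H₁ = H 0`. -/
def blockDiag (T m p : ℕ) (H : ℕ → Matrix (Fin m) (Fin p) ℂ) :
    Matrix (Fin T × Fin m) (Fin T × Fin p) ℂ :=
  fun x y => if x.1.1 = y.1.1 then H 0 x.2 y.2 else 0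

section aux

open Matrix Complex ComplexOrder

variable {n q : Type*} [Fintype n] [Fintype q] [DecidableEq n] [DecidableEq q]

/-- determinant of a PSD matrix is a nonneg real -/
lemma aux_psd_det {M : Matrix n n ℂ} (hM : M.PosSemidef) :
    ∃ r : ℝ, 0 ≤ r ∧ M.det = (r : ℂ) := by
  refine ⟨∏ i, hM.1.eigenvalues i, Finset.prod_nonneg fun i _ => hM.eigenvalues_nonneg i, ?_⟩
  rw [hM.1.det_eq_prod_eigenvalues]
  push_cast
  rfl

/-- determinant of 1 + PSD is a real ≥ 1 -/
lemma aux_det_one_add_psd {M : Matrix n n ℂ} (hM : M.PosSemidef) :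
    ∃ r : ℝ, 1 ≤ r ∧ (1 + M).det = (r : ℂ) := by
  have hH := hM.1
  have hone : (1:ℝ) ≤ ∏ i, (1 + hH.eigenvalues i) := by
    calc (1:ℝ) = ∏ _i : n, 1 := by simp
    _ ≤ ∏ i, (1 + hH.eigenvalues i) :=
      Finset.prod_le_prod (fun _ _ => zero_le_one)
        (fun i _ => by linarith [hM.eigenvalues_nonneg i])
  refine ⟨∏ i, (1 + hH.eigenvalues i), hone, ?_⟩
  have hU1 : (hH.eigenvectorUnitary : Matrix n n ℂ) * (star hH.eigenvectorUnitary : Matrix n n ℂ) = 1 := by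
    exact (Matrix.mem_unitaryGroup_iff).mp hH.eigenvectorUnitary.2
  have h1M : 1 + M = (hH.eigenvectorUnitary : Matrix n n ℂ) *
      (1 + diagonal (RCLike.ofReal ∘ hH.eigenvalues)) *
      (star hH.eigenvectorUnitary : Matrix n n ℂ) := by
    rw [Matrix.mul_add, Matrix.add_mul, Matrix.mul_one, hU1, ← Unitary.conjStarAlgAut_apply (S := ℂ), ← hH.spectral_theorem]
  rw [h1M, det_mul, det_mul]
  have : det ((hH.eigenvectorUnitary : Matrix n n ℂ)) *
      det ((star hH.eigenvectorUnitary : Matrix n n ℂ)) = 1 := by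
    rw [← det_mul, hU1, det_one]
  rw [mul_comm, ← mul_assoc, mul_comm (det _), this, one_mul]
  have : (1 : Matrix n n ℂ) + diagonal (RCLike.ofReal ∘ hH.eigenvalues) =
      diagonal (fun i => 1 + (hH.eigenvalues i : ℂ)) := by
    rw [← diagonal_one, diagonal_add]
    rfl
  rw [this, det_diagonal]
  push_cast
  rfl

open scoped MatrixOrder in
/-- determinant monotonicity in the Loewner order (real parts). -/
lemma aux_det_mono {A B : Matrix n n ℂ} (hA : A.PosSemidef)
    (hBA : (B - A).PosSemidef) : A.det.re ≤ B.det.re := by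
  have hB : B.PosSemidef := by
    have := hA.add hBA
    rwa [add_sub_cancel] at this
  by_cases hd : A.det = 0
  · obtain ⟨r, hr0, hr⟩ := aux_psd_det hB
    rw [hd, hr]
    simpa using hr0
  · -- A is invertible; use its square root
    set S := CFC.sqrt A with hSdef
    have hSpsd : S.PosSemidef := (CFC.sqrt_nonneg A).posSemidef
    have hSS : S * S = A := CFC.sqrt_mul_sqrt_self A hA.nonneg
    obtain ⟨s, hs0, hs⟩ := aux_psd_det hSpsd
    have hdetA : A.det = (s:ℂ) * (s:ℂ) := by rw [← hSS, det_mul, hs]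
    have hsne : s ≠ 0 := by
      intro h; apply hd; rw [hdetA, h]; simp
    have hSunit : IsUnit S.det := by
      rw [hs]; exact (isUnit_iff_ne_zero.mpr (by exact_mod_cast hsne))
    have hSinv : S * S⁻¹ = 1 := mul_nonsing_inv S hSunit
    have hSinv' : S⁻¹ * S = 1 := nonsing_inv_mul S hSunit
    have hSherm : S⁻¹.IsHermitian := hSpsd.1.inv
    set C := B - A with hC
    have h2 : S * (S⁻¹ * C * S⁻¹) * S = C := by
      simp only [Matrix.mul_assoc, hSinv', Matrix.mul_one]
      rw [← Matrix.mul_assoc, hSinv, Matrix.one_mul]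
    have hBeq : B = S * (1 + S⁻¹ * C * S⁻¹) * S := by
      rw [Matrix.mul_add, Matrix.add_mul, Matrix.mul_one, h2, hSS, hC, add_sub_cancel]
    have hK : (S⁻¹ * C * S⁻¹).PosSemidef := by
      have := hBA.mul_mul_conjTranspose_same S⁻¹
      rwa [hSherm.eq] at this
    obtain ⟨r, hr1, hr⟩ := aux_det_one_add_psd hK
    have : B.det = ((s * r * s : ℝ) : ℂ) := by
      rw [hBeq, det_mul, det_mul, hs, hr]
      push_cast; ring
    rw [this, hdetA]
    have : ((s:ℂ) * (s:ℂ)).re = s * s := by push_cast; simp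
    rw [this]
    simp only [Complex.ofReal_re]
    nlinarith

set_option maxHeartbeats 1000000 in
/-- Cauchy–Schwarz-type inequality for determinants of Gram-type matrices. -/
lemma aux_det_CS (X Y : Matrix n q ℂ) :
    ‖(1 + X * Yᴴ).det‖ ^ 2 ≤ (1 + X * Xᴴ).det.re * (1 + Y * Yᴴ).det.re := by
  have hW : fromBlocks (1 + X * Xᴴ) (1 + X * Yᴴ) (1 + X * Yᴴ)ᴴ (1 + Y * Yᴴ) =
      (fromBlocks 1 X 1 Y : Matrix (n ⊕ n) (n ⊕ q) ℂ) * (fromBlocks (1 : Matrix n n ℂ) X 1 Y)ᴴ := by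
    rw [fromBlocks_conjTranspose, fromBlocks_multiply]
    congr 1 <;> simp [Matrix.conjTranspose_mul, Matrix.conjTranspose_add, add_comm]
  have hMpsd : (fromBlocks (1 + X * Xᴴ) (1 + X * Yᴴ) (1 + X * Yᴴ)ᴴ (1 + Y * Yᴴ)).PosSemidef := by
    rw [hW]; exact posSemidef_self_mul_conjTranspose _
  have hPpd : (1 + X * Xᴴ).PosDef :=
    Matrix.PosDef.one.add_posSemidef (posSemidef_self_mul_conjTranspose X)
  haveI : Invertible (1 + X * Xᴴ) := hPpd.isUnit.invertible
  have hSchur : ((1 + Y * Yᴴ) - (1 + X * Yᴴ)ᴴ * (1 + X * Xᴴ)⁻¹ * (1 + X * Yᴴ)).PosSemidef :=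
    (Matrix.PosDef.fromBlocks₁₁ (1 + X * Yᴴ) (1 + Y * Yᴴ) hPpd).mp hMpsd
  have hKpsd : ((1 + X * Yᴴ)ᴴ * (1 + X * Xᴴ)⁻¹ * (1 + X * Yᴴ)).PosSemidef :=
    (hPpd.inv.posSemidef).conjTranspose_mul_mul_same (1 + X * Yᴴ)
  have hmono := aux_det_mono hKpsd hSchur
  obtain ⟨pr, hp1, hp⟩ := aux_det_one_add_psd (posSemidef_self_mul_conjTranspose X)
  obtain ⟨rr, hr1, hr⟩ := aux_det_one_add_psd (posSemidef_self_mul_conjTranspose Y)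
  have hp0 : (0:ℝ) < pr := lt_of_lt_of_le one_pos hp1
  have hKdet : ((1 + X * Yᴴ)ᴴ * (1 + X * Xᴴ)⁻¹ * (1 + X * Yᴴ)).det =
      ((Complex.normSq (1 + X * Yᴴ).det * pr⁻¹ : ℝ) : ℂ) := by
    rw [det_mul, det_mul, det_conjTranspose, det_nonsing_inv, hp, Ring.inverse_eq_inv']
    calc star (1 + X * Yᴴ).det * ((pr:ℂ))⁻¹ * (1 + X * Yᴴ).det
        = ((1 + X * Yᴴ).det * (starRingEnd ℂ) ((1 + X * Yᴴ).det)) * ((pr:ℂ))⁻¹ := by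
          rw [RCLike.star_def]; ring
      _ = ((Complex.normSq ((1 + X * Yᴴ).det) : ℂ)) * ((pr:ℂ))⁻¹ := by
          rw [Complex.mul_conj]
      _ = ((Complex.normSq (1 + X * Yᴴ).det * pr⁻¹ : ℝ) : ℂ) := by push_cast; ring
  rw [hKdet, hr] at hmono
  simp only [Complex.ofReal_re] at hmono
  rw [hp, hr]
  simp only [Complex.ofReal_re]
  have hnormsq : ‖(1 + X * Yᴴ).det‖ ^ 2 = Complex.normSq (1 + X * Yᴴ).det := by
    rw [Complex.sq_norm]
  rw [hnormsq]
  calc Complex.normSq (1 + X * Yᴴ).det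
      = (Complex.normSq (1 + X * Yᴴ).det * pr⁻¹) * pr := by field_simp
    _ ≤ rr * pr := mul_le_mul_of_nonneg_right hmono hp0.le
    _ = pr * rr := mul_comm _ _

def bLT (T m p : ℕ) (H : ℕ → Matrix (Fin m) (Fin p) ℂ) :
    Matrix (Fin T × Fin m) (Fin T × Fin p) ℂ :=
  fun x y => if y.1.1 ≤ x.1.1 then H (x.1.1 - y.1.1) x.2 y.2 else 0

def bD (T m p : ℕ) (H : ℕ → Matrix (Fin m) (Fin p) ℂ) :
    Matrix (Fin T × Fin m) (Fin T × Fin p) ℂ :=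
  fun x y => if x.1.1 = y.1.1 then H 0 x.2 y.2 else 0

/-- The twisted channel matrix, with block `(i,j)` scaled by `ω ^ (i - j)`. -/
def auxB (T m p : ℕ) (H : ℕ → Matrix (Fin m) (Fin p) ℂ) (ω : ℂ) :
    Matrix (Fin T × Fin m) (Fin T × Fin p) ℂ :=
  fun x y => if y.1.1 ≤ x.1.1 then ω ^ (x.1.1 - y.1.1) * H (x.1.1 - y.1.1) x.2 y.2 else 0

lemma auxB_one (T m p : ℕ) (H : ℕ → Matrix (Fin m) (Fin p) ℂ) :
    auxB T m p H 1 = bLT T m p H := by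
  funext x y; simp [auxB, bLT]

lemma auxB_zero (T m p : ℕ) (H : ℕ → Matrix (Fin m) (Fin p) ℂ) :
    auxB T m p H 0 = bD T m p H := by
  funext x y
  simp only [auxB, bD]
  by_cases h : y.1.1 ≤ x.1.1
  · by_cases he : x.1.1 = y.1.1
    · have h0 : x.1.1 - y.1.1 = 0 := by omega
      simp [h, he, h0]
    · have h0 : x.1.1 - y.1.1 ≠ 0 := by omega
      simp [h, he, zero_pow h0]
  · have he : ¬ x.1.1 = y.1.1 := by omega
    simp [h, he]

set_option maxHeartbeats 1000000 in
/-- Twisting by a unimodular `ω` does not change the determinant. -/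
lemma auxB_det (T m p : ℕ) (H : ℕ → Matrix (Fin m) (Fin p) ℂ) (s : ℝ) {ω : ℂ}
    (hω : ‖ω‖ = 1) :
    (1 + (s:ℂ) • (auxB T m p H ω * (auxB T m p H ω)ᴴ)).det =
    (1 + (s:ℂ) • (bLT T m p H * (bLT T m p H)ᴴ)).det := by
  have hωn : Complex.normSq ω = 1 := by
    rw [Complex.normSq_eq_norm_sq, hω]; norm_num
  have hωconj : ∀ k : ℕ, ω ^ k * (starRingEnd ℂ) (ω ^ k) = 1 := by
    intro k
    rw [Complex.mul_conj, map_pow, hωn, one_pow]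
    norm_num
  set A := bLT T m p H with hA
  set U : Matrix (Fin T × Fin m) (Fin T × Fin m) ℂ := diagonal (fun x => ω ^ x.1.1) with hU
  set V : Matrix (Fin T × Fin p) (Fin T × Fin p) ℂ := diagonal (fun y => ω ^ y.1.1) with hV
  have hBUAV : auxB T m p H ω = U * A * Vᴴ := by
    funext x y
    rw [hU, hV, diagonal_conjTranspose, mul_diagonal, diagonal_mul]
    simp only [Pi.star_apply, auxB, bLT, hA]
    by_cases h : y.1.1 ≤ x.1.1
    · simp only [if_pos h]
      have hx : x.1.1 = (x.1.1 - y.1.1) + y.1.1 := (Nat.sub_add_cancel h).symm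
      have key : ω ^ x.1.1 * (starRingEnd ℂ) (ω ^ y.1.1) = ω ^ (x.1.1 - y.1.1) := by
        conv_lhs => rw [hx]
        rw [pow_add, mul_assoc, hωconj, mul_one]
      rw [RCLike.star_def, mul_right_comm, key]
    · simp [h]
  have hVV : Vᴴ * V = 1 := by
    have hfun : (fun i : Fin T × Fin p => star (fun y : Fin T × Fin p => ω ^ (y.1.1:ℕ)) i *
        ω ^ (i.1.1:ℕ)) = fun _ => (1:ℂ) := by
      funext i
      rw [Pi.star_apply, RCLike.star_def, mul_comm]
      exact hωconj _
    rw [hV, diagonal_conjTranspose, diagonal_mul_diagonal, hfun, diagonal_one]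
  have hUU : U * Uᴴ = 1 := by
    have hfun : (fun i : Fin T × Fin m => ω ^ (i.1.1:ℕ) *
        star (fun x : Fin T × Fin m => ω ^ (x.1.1:ℕ)) i) = fun _ => (1:ℂ) := by
      funext i
      rw [Pi.star_apply, RCLike.star_def]
      exact hωconj _
    rw [hU, diagonal_conjTranspose, diagonal_mul_diagonal, hfun, diagonal_one]
  have h1 : auxB T m p H ω * (auxB T m p H ω)ᴴ = U * (A * Aᴴ) * Uᴴ := by
    rw [hBUAV, Matrix.conjTranspose_mul, Matrix.conjTranspose_mul,
      conjTranspose_conjTranspose]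
    have hmid : Vᴴ * (V * (Aᴴ * Uᴴ)) = Aᴴ * Uᴴ := by
      rw [← Matrix.mul_assoc, hVV, Matrix.one_mul]
    simp only [Matrix.mul_assoc]
    rw [hmid]
  have h2 : 1 + (s:ℂ) • (auxB T m p H ω * (auxB T m p H ω)ᴴ) =
      U * (1 + (s:ℂ) • (A * Aᴴ)) * Uᴴ := by
    rw [h1, Matrix.mul_add, Matrix.add_mul, Matrix.mul_one, hUU, Matrix.mul_smul,
      Matrix.smul_mul]
  rw [h2, det_mul, det_mul]
  have hdetU : det U * det Uᴴ = 1 := by rw [← det_mul, hUU, det_one]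
  calc det U * det (1 + (s:ℂ) • (A * Aᴴ)) * det Uᴴ
      = det (1 + (s:ℂ) • (A * Aᴴ)) * (det U * det Uᴴ) := by ring
    _ = det (1 + (s:ℂ) • (A * Aᴴ)) := by rw [hdetU, mul_one]

/-- The twisted determinant is an entire function of `ω`. -/
lemma auxB_differentiable (T m p : ℕ) (H : ℕ → Matrix (Fin m) (Fin p) ℂ) (s : ℝ) :
    Differentiable ℂ (fun ω =>
      (1 + (s:ℂ) • (auxB T m p H ω * (bD T m p H)ᴴ)).det) := by
  have hent : ∀ (x y : Fin T × Fin m), Differentiable ℂ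
      (fun ω => ((1 + (s:ℂ) • (auxB T m p H ω * (bD T m p H)ᴴ) : Matrix (Fin T × Fin m) (Fin T × Fin m) ℂ)) x y) := by
    intro x y
    have hfun : (fun ω => ((1 + (s:ℂ) • (auxB T m p H ω * (bD T m p H)ᴴ) : Matrix (Fin T × Fin m) (Fin T × Fin m) ℂ)) x y) =
        fun ω => (1 : Matrix (Fin T × Fin m) (Fin T × Fin m) ℂ) x y +
          (s:ℂ) * ∑ k, auxB T m p H ω x k * (bD T m p H)ᴴ k y := by
      funext ω
      simp [Matrix.add_apply, Matrix.smul_apply, Matrix.mul_apply, smul_eq_mul]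
    rw [hfun]
    refine (differentiable_const _).add ((differentiable_const _).mul
      (Differentiable.fun_sum fun k _ => Differentiable.mul ?_ (differentiable_const _)))
    simp only [auxB]
    by_cases h : k.1.1 ≤ x.1.1
    · simp only [if_pos h]
      exact (differentiable_pow _).mul (differentiable_const _)
    · simp only [if_neg h]
      exact differentiable_const 0
  have hdet : (fun ω => (1 + (s:ℂ) • (auxB T m p H ω * (bD T m p H)ᴴ)).det) =
      fun ω => ∑ σ : Equiv.Perm (Fin T × Fin m), Equiv.Perm.sign σ •
        ∏ i, ((1 + (s:ℂ) • (auxB T m p H ω * (bD T m p H)ᴴ) : Matrix (Fin T × Fin m) (Fin T × Fin m) ℂ)) (σ i) i := by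
    funext ω
    rw [Matrix.det_apply]
  rw [hdet]
  refine Differentiable.fun_sum fun σ _ => ?_
  have : (fun ω => Equiv.Perm.sign σ •
        ∏ i, ((1 + (s:ℂ) • (auxB T m p H ω * (bD T m p H)ᴴ) : Matrix (Fin T × Fin m) (Fin T × Fin m) ℂ)) (σ i) i) =
      fun ω => ((Equiv.Perm.sign σ : ℤ) : ℂ) *
        ∏ i, ((1 + (s:ℂ) • (auxB T m p H ω * (bD T m p H)ᴴ) : Matrix (Fin T × Fin m) (Fin T × Fin m) ℂ)) (σ i) i := by
    funext ω
    rw [Units.smul_def, zsmul_eq_mul]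
  rw [this]
  exact (differentiable_const _).mul (Differentiable.fun_finset_prod fun i _ => hent (σ i) i)

lemma aux_smul {n' q' : Type*} [Fintype q'] (s : ℝ) (hs : 0 ≤ s)
    (M : Matrix n' q' ℂ) (N : Matrix n' q' ℂ) :
    (s:ℂ) • (M * Nᴴ) = ((Real.sqrt s : ℂ) • M) * ((Real.sqrt s : ℂ) • N)ᴴ := by
  rw [conjTranspose_smul, Matrix.smul_mul, Matrix.mul_smul, smul_smul]
  congr 1
  rw [RCLike.star_def, Complex.conj_ofReal, ← Complex.ofReal_mul, Real.mul_self_sqrt hs]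

theorem main_bd (T m p : ℕ)
    (H : ℕ → Matrix (Fin m) (Fin p) ℂ) (SNR : ℝ) (hSNR : 0 < SNR) :
    ((1 + (SNR : ℂ) • (bD T m p H * (bD T m p H)ᴴ)).det).re ≤
      ((1 + (SNR : ℂ) • (bLT T m p H * (bLT T m p H)ᴴ)).det).re := by
  have hs0 : (0:ℝ) ≤ SNR := hSNR.le
  obtain ⟨ad, had1, hadet⟩ := aux_det_one_add_psd
    (M := (SNR:ℂ) • (bLT T m p H * (bLT T m p H)ᴴ))
    (by rw [aux_smul SNR hs0]; exact posSemidef_self_mul_conjTranspose _)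
  obtain ⟨cd, hcd1, hcdet⟩ := aux_det_one_add_psd
    (M := (SNR:ℂ) • (bD T m p H * (bD T m p H)ᴴ))
    (by rw [aux_smul SNR hs0]; exact posSemidef_self_mul_conjTranspose _)
  set g : ℂ → ℂ := fun ω => (1 + (SNR:ℂ) • (auxB T m p H ω * (bD T m p H)ᴴ)).det with hg
  have hbound : ∀ z ∈ frontier (Metric.ball (0:ℂ) 1), ‖g z‖ ≤ Real.sqrt (ad * cd) := by
    intro z hz
    rw [frontier_ball (0:ℂ) one_ne_zero] at hz
    have hz1 : ‖z‖ = 1 := by simpa [mem_sphere_zero_iff_norm] using hz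
    have hCS := aux_det_CS ((Real.sqrt SNR : ℂ) • auxB T m p H z)
      ((Real.sqrt SNR : ℂ) • bD T m p H)
    rw [← aux_smul SNR hs0 (auxB T m p H z) (bD T m p H),
        ← aux_smul SNR hs0 (auxB T m p H z) (auxB T m p H z),
        ← aux_smul SNR hs0 (bD T m p H) (bD T m p H)] at hCS
    rw [auxB_det T m p H SNR hz1, hadet, hcdet] at hCS
    simp only [Complex.ofReal_re] at hCS
    rw [Real.le_sqrt (norm_nonneg _)]
    · exact hCS
    · nlinarith
  have h0 : ‖g 0‖ ≤ Real.sqrt (ad * cd) :=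
    Complex.norm_le_of_forall_mem_frontier_norm_le Metric.isBounded_ball
      (auxB_differentiable T m p H SNR).diffContOnCl hbound
      (subset_closure (Metric.mem_ball_self one_pos))
  have hg0 : g 0 = (cd : ℂ) := by
    rw [hg]
    simp only
    rw [auxB_zero T m p H]
    exact hcdet
  rw [hg0] at h0
  rw [Complex.norm_real, Real.norm_eq_abs, abs_of_pos (lt_of_lt_of_le one_pos hcd1)] at h0
  have hsq : cd ^ 2 ≤ ad * cd := by
    exact (Real.le_sqrt (by linarith : (0:ℝ) ≤ cd) (by nlinarith : (0:ℝ) ≤ ad * cd)).mp h0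
  have hfin : cd ≤ ad := by nlinarith
  rw [hadet, hcdet]
  simpa using hfin

end aux

/-- `det(I + SNR·H^{ud}(H^{ud})^†) ≥ det(I + SNR·H^d(H^d)^†)` (both determinants are real
and nonnegative since the matrices are positive definite Hermitian): the mutual
information, hence the outage exponent, of the channel `H^{ud}` is at least that of the
block-diagonal channel `H^d`. -/
theorem det_blockLowerTri_ge_det_blockDiag (T m p : ℕ)
    (H : ℕ → Matrix (Fin m) (Fin p) ℂ) (SNR : ℝ) (hSNR : 0 < SNR) :
    ((1 + (SNR : ℂ) •
        (blockDiag T m p H * (blockDiag T m p H)ᴴ)).det).re ≤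
      ((1 + (SNR : ℂ) •
        (blockLowerTri T m p H * (blockLowerTri T m p H)ᴴ)).det).re := by
  have h1 : _root_.blockLowerTri T m p H = bLT T m p H := rfl
  have h2 : _root_.blockDiag T m p H = bD T m p H := rfl
  rw [h1, h2]
  exact main_bd T m p H SNR hSNR
end

section
/- The diversity-multiplexing tradeoff of the N-hop relay channel with M_n antennas at stage n is upper bounded, for each cut n, by the point-to-point MIMO tradeoff: for integer r with 0 <= r <= min(M_n, M_{n+1}), d(r) <= (M_n - r)(M_{n+1} - r); in particular the maximum diversity gain d(0) <= min over n of M_n * M_{n+1}. -/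
open Filter

/-- Cut-set upper bound on the DM-tradeoff of the `N`-hop relay channel with `M n`
antennas at stage `n`. Let `Pout r s` be the outage probability of the relay channel at
multiplexing gain `r` and SNR `s`, and `PoutCut n r s` the outage probability of the
point-to-point MIMO channel across the cut between stages `n` and `n+1`. Assume:
(cut-set bound) the end-to-end outage probability dominates each cut's outage probability
for large SNR; (Zheng–Tse) each cut's outage exponent at integer multiplexing gain
`r ≤ min(M n, M (n+1))` equals `(M n - r)(M (n+1) - r)`; and `d r` is the SNR exponent of
`Pout r`. Then for every cut `n` and integer `r ≤ min(M n, M (n+1))`,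
`d r ≤ (M n - r)(M (n+1) - r)`; in particular `d 0 ≤ min_n M n · M (n+1)`. -/
theorem dm_tradeoff_cutset_upper_bound (N : ℕ) (hN : 1 ≤ N) (M : Fin (N + 1) → ℕ)
    (hM : ∀ n, 1 ≤ M n)
    (Pout : ℝ → ℝ → ℝ) (PoutCut : Fin N → ℝ → ℝ → ℝ)
    (hpos : ∀ n r s, 0 < PoutCut n r s)
    (hcutset : ∀ n r, ∀ᶠ s in atTop, PoutCut n r s ≤ Pout r s)
    (hcutExp : ∀ n : Fin N, ∀ r : ℕ, r ≤ min (M n.castSucc) (M n.succ) →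
      Tendsto (fun s : ℝ => -(Real.log (PoutCut n r s) / Real.log s)) atTop
        (nhds (((M n.castSucc : ℝ) - r) * ((M n.succ : ℝ) - r))))
    (d : ℝ → ℝ)
    (hd : ∀ r : ℝ, Tendsto (fun s : ℝ => -(Real.log (Pout r s) / Real.log s)) atTop
      (nhds (d r))) :
    (∀ n : Fin N, ∀ r : ℕ, r ≤ min (M n.castSucc) (M n.succ) →
        d r ≤ ((M n.castSucc : ℝ) - r) * ((M n.succ : ℝ) - r)) ∧
      d 0 ≤ sInf (Set.range fun n : Fin N => ((M n.castSucc : ℝ) * (M n.succ : ℝ))) := by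
  have key : ∀ n : Fin N, ∀ r : ℕ, r ≤ min (M n.castSucc) (M n.succ) →
      d r ≤ ((M n.castSucc : ℝ) - r) * ((M n.succ : ℝ) - r) := by
    intro n r hr
    refine le_of_tendsto_of_tendsto (hd r) (hcutExp n r hr) ?_
    filter_upwards [hcutset n r, eventually_gt_atTop (1:ℝ)] with s hle hs
    have hlogs : 0 < Real.log s := Real.log_pos hs
    have h1 : Real.log (PoutCut n r s) ≤ Real.log (Pout r s) :=
      Real.log_le_log (hpos n r s) hle
    gcongr
  refine ⟨key, le_csInf ?_ ?_⟩
  · haveI : NeZero N := ⟨by omega⟩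
    exact Set.range_nonempty _
  · rintro b ⟨n, rfl⟩
    have := key n 0 (Nat.zero_le _)
    simpa using this
end

section
/- Let α_k = min_{0<=n<=k-1} M_n M_{n+1} and suppose a set of α_k edge-disjoint paths exists in the k-hop complete layered graph, redistributed so that each final-stage node i receives n_i paths with sum n_i = α_k and each n_i in {floor(α_k/M_k), ceil(α_k/M_k)}. Then sum_{i=1}^{M_k} min(n_i, M_{k+1}) = min(α_k, M_k M_{k+1}). -/
/-- The key counting identity in the induction step of the maximum-independent-paths
lemma. Suppose `α_k = ∑ n i` where the `n i` partition `α_k` into `M_k` parts, with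
`n i = ⌊α_k/M_k⌋` for the first `a_k` indices and `n i = ⌈α_k/M_k⌉` for the rest, and
`α_k = a_k ⌊α_k/M_k⌋ + (M_k - a_k) ⌈α_k/M_k⌉`. Then
`∑ i min(n i, M_{k+1}) = min(α_k, M_k · M_{k+1})`. -/
theorem counting_identity (Mk Mk1 αk : ℕ) (hMk : 1 ≤ Mk) (hMk1 : 1 ≤ Mk1)
    (ak : ℕ) (hak : ak ≤ Mk)
    (n : Fin Mk → ℕ)
    (hsum : ∑ i, n i = αk)
    (hn : ∀ i : Fin Mk, n i = if i.1 < ak then αk / Mk else (αk + Mk - 1) / Mk)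
    (hdecomp : αk = ak * (αk / Mk) + (Mk - ak) * ((αk + Mk - 1) / Mk)) :
    ∑ i, min (n i) Mk1 = min αk (Mk * Mk1) := by
  set f := αk / Mk with hf
  set c := (αk + Mk - 1) / Mk with hc
  have hfc : f ≤ c := Nat.div_le_div_right (by omega)
  have hmod : Mk * f + αk % Mk = αk := Nat.div_add_mod αk Mk
  have hmodlt : αk % Mk < Mk := Nat.mod_lt _ (by omega)
  have hcf : c ≤ f + 1 := by
    have hr : (f + 2) * Mk = Mk * f + 2 * Mk := by ring
    have : αk + Mk - 1 < (f + 2) * Mk := by omega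
    have := (Nat.div_lt_iff_lt_mul (by omega : 0 < Mk)).mpr this
    omega
  have hMc : αk ≤ Mk * c := by
    calc αk = ak * f + (Mk - ak) * c := hdecomp
    _ ≤ ak * c + (Mk - ak) * c := by
        gcongr
    _ = Mk * c := by rw [← Nat.add_mul]; congr 1; omega
  have hMf : Mk * f ≤ αk := by
    calc Mk * f = ak * f + (Mk - ak) * f := by rw [← Nat.add_mul]; congr 1; omega
    _ ≤ ak * f + (Mk - ak) * c := by gcongr
    _ = αk := hdecomp.symm
  rcases le_or_gt c Mk1 with hcase | hcase
  · -- all n i ≤ Mk1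
    have heach : ∀ i : Fin Mk, min (n i) Mk1 = n i := by
      intro i
      have := hn i
      rcases lt_or_ge i.1 ak with h | h
      · rw [this, if_pos h]; omega
      · rw [this, if_neg (not_lt.mpr h)]; omega
    rw [Finset.sum_congr rfl (fun i _ => heach i), hsum]
    have : αk ≤ Mk * Mk1 := le_trans hMc (by gcongr)
    omega
  · -- Mk1 < c, so Mk1 ≤ f
    have hM1f : Mk1 ≤ f := by omega
    have heach : ∀ i : Fin Mk, min (n i) Mk1 = Mk1 := by
      intro i
      have := hn i
      rcases lt_or_ge i.1 ak with h | h
      · rw [this, if_pos h]; omega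
      · rw [this, if_neg (not_lt.mpr h)]; omega
    rw [Finset.sum_congr rfl (fun i _ => heach i), Finset.sum_const,
      Finset.card_univ, Fintype.card_fin, smul_eq_mul]
    have : Mk * Mk1 ≤ αk := le_trans (by gcongr) hMf
    omega
end
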